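/- arXiv:1706.05816 — 8 statements merged into one kernel-verified Lean document; each statement's English description precedes it below -/
import Mathlib

section
/- For every τ in the complex upper half plane (Im τ > 0), one has the identity (Σ_{n∈ℤ} exp(πiτn²))⁴ = (Σ_{n∈ℤ} (−1)ⁿ exp(πiτn²))⁴ + (Σ_{n∈ℤ} exp(πiτ(n+1/2)²))⁴; that is, ϑ[0,0]⁴ = ϑ[0,1]⁴ + ϑ[1,0]⁴ as functions on the upper half plane. -/
/-!
All three nullwerte are values of the two-variable theta function `θ(z, τ) = jacobiTheta₂ z τ`,
at `z = 0`, `z = 1/2` and `z = τ/2` (the last up to the factor `exp(πiτ/4)`). Writing a product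
`θ(z, τ) θ(w, τ)` as a sum over `(m, n) ∈ ℤ²` and substituting `(m, n) = (u + v, u - v)` or
`(u + v + 1, u - v)` according to the parity of `m + n` gives a product formula at `2τ`.
With `X = θ(0, 2τ)`, `Y = θ(τ, 2τ)` and `q = exp(πiτ)` it yields
`ϑ[0,0]² = X² + qY²`, `ϑ[0,1]² = X² - qY²` and `ϑ[1,0]⁴ = 4qX²Y²`, and the identity is
`(X² + qY²)² - (X² - qY²)² = 4qX²Y²`.
-/

open Complex Real

def intPairParityEquiv : (ℤ × ℤ) ⊕ (ℤ × ℤ) ≃ ℤ × ℤ where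
  toFun := Sum.elim (fun p ↦ (p.1 + p.2, p.1 - p.2)) (fun p ↦ (p.1 + p.2 + 1, p.1 - p.2))
  invFun x :=
    if (x.1 + x.2) % 2 = 0 then .inl ((x.1 + x.2) / 2, (x.1 - x.2) / 2)
    else .inr ((x.1 + x.2) / 2, (x.1 - x.2) / 2)
  left_inv := by
    rintro (⟨u, v⟩ | ⟨u, v⟩)
    · dsimp only [Sum.elim_inl]
      rw [if_pos (by omega), Sum.inl.injEq, Prod.mk.injEq]
      omega
    · dsimp only [Sum.elim_inr]
      rw [if_neg (by omega), Sum.inr.injEq, Prod.mk.injEq]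
      omega
  right_inv := by
    rintro ⟨a, b⟩
    dsimp only
    split_ifs <;> simp only [Sum.elim_inl, Sum.elim_inr, Prod.mk.injEq] <;> omega

theorem tsum_int_prod_eq_tsum_even_add_tsum_odd {α : Type*} [AddCommGroup α] [UniformSpace α]
    [IsUniformAddGroup α] [CompleteSpace α] [T2Space α] {F : ℤ × ℤ → α} (hF : Summable F) :
    ∑' p, F p = ∑' p : ℤ × ℤ, F (p.1 + p.2, p.1 - p.2) +
      ∑' p : ℤ × ℤ, F (p.1 + p.2 + 1, p.1 - p.2) := by
  have hFe : Summable (F ∘ intPairParityEquiv) := intPairParityEquiv.summable_iff.mpr hF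
  rw [← intPairParityEquiv.tsum_eq]
  exact hFe.comp_injective Sum.inl_injective |>.tsum_sum (hFe.comp_injective Sum.inr_injective)

lemma summable_norm_jacobiTheta₂_term (z : ℂ) {τ : ℂ} (hτ : 0 < τ.im) :
    Summable fun n : ℤ ↦ ‖jacobiTheta₂_term n z τ‖ :=
  summable_norm_iff.mpr ((summable_jacobiTheta₂_term_iff z τ).mpr hτ)

lemma jacobiTheta₂_term_add_mul_sub (u v : ℤ) (z w τ : ℂ) :
    jacobiTheta₂_term (u + v) z τ * jacobiTheta₂_term (u - v) w τ =
      jacobiTheta₂_term u (z + w) (2 * τ) * jacobiTheta₂_term v (z - w) (2 * τ) := by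
  simp only [jacobiTheta₂_term, ← Complex.exp_add]
  congr 1; push_cast; ring

lemma jacobiTheta₂_term_add_add_one_mul_sub (u v : ℤ) (z w τ : ℂ) :
    jacobiTheta₂_term (u + v + 1) z τ * jacobiTheta₂_term (u - v) w τ =
      cexp (2 * π * I * z + π * I * τ) *
        (jacobiTheta₂_term u (z + w + τ) (2 * τ) * jacobiTheta₂_term v (z - w + τ) (2 * τ)) := by
  simp only [jacobiTheta₂_term, ← Complex.exp_add]
  congr 1; push_cast; ring

theorem jacobiTheta₂_mul_jacobiTheta₂ (z w : ℂ) {τ : ℂ} (hτ : 0 < τ.im) :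
    jacobiTheta₂ z τ * jacobiTheta₂ w τ =
      jacobiTheta₂ (z + w) (2 * τ) * jacobiTheta₂ (z - w) (2 * τ) +
        cexp (2 * π * I * z + π * I * τ) *
          (jacobiTheta₂ (z + w + τ) (2 * τ) * jacobiTheta₂ (z - w + τ) (2 * τ)) := by
  have h2τ : 0 < (2 * τ).im := by simpa using hτ
  have hz := summable_norm_jacobiTheta₂_term z hτ
  have hw := summable_norm_jacobiTheta₂_term w hτ
  have hzw := summable_mul_of_summable_norm hz hw
  rw [jacobiTheta₂, jacobiTheta₂, tsum_mul_tsum_of_summable_norm hz hw,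
    tsum_int_prod_eq_tsum_even_add_tsum_odd hzw]
  simp only [jacobiTheta₂_term_add_mul_sub, jacobiTheta₂_term_add_add_one_mul_sub, tsum_mul_left,
    jacobiTheta₂]
  rw [tsum_mul_tsum_of_summable_norm (summable_norm_jacobiTheta₂_term _ h2τ)
      (summable_norm_jacobiTheta₂_term _ h2τ),
    tsum_mul_tsum_of_summable_norm (summable_norm_jacobiTheta₂_term _ h2τ)
      (summable_norm_jacobiTheta₂_term _ h2τ)]

lemma jacobiTheta₂_zero_sq {τ : ℂ} (hτ : 0 < τ.im) :
    jacobiTheta₂ 0 τ ^ 2 =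
      jacobiTheta₂ 0 (2 * τ) ^ 2 + cexp (π * I * τ) * jacobiTheta₂ τ (2 * τ) ^ 2 := by
  simpa [sq] using jacobiTheta₂_mul_jacobiTheta₂ 0 0 hτ

lemma jacobiTheta₂_one_half_sq {τ : ℂ} (hτ : 0 < τ.im) :
    jacobiTheta₂ (1 / 2) τ ^ 2 =
      jacobiTheta₂ 0 (2 * τ) ^ 2 - cexp (π * I * τ) * jacobiTheta₂ τ (2 * τ) ^ 2 := by
  have h := jacobiTheta₂_mul_jacobiTheta₂ (1 / 2) (1 / 2) hτ
  have hperiod : jacobiTheta₂ 1 (2 * τ) = jacobiTheta₂ 0 (2 * τ) := by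
    simpa using jacobiTheta₂_add_left 0 (2 * τ)
  rw [add_halves, sub_self, zero_add, hperiod, add_comm 1 τ, jacobiTheta₂_add_left] at h
  have hsign : cexp (2 * π * I * (1 / 2) + π * I * τ) = -cexp (π * I * τ) := by
    rw [Complex.exp_add, show 2 * (π : ℂ) * I * (1 / 2) = π * I by ring, Complex.exp_pi_mul_I]
    ring
  rw [sq, sq, sq, h, hsign]
  ring

lemma jacobiTheta₂_half_sq {τ : ℂ} (hτ : 0 < τ.im) :
    jacobiTheta₂ (τ / 2) τ ^ 2 = 2 * jacobiTheta₂ 0 (2 * τ) * jacobiTheta₂ τ (2 * τ) := by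
  have h := jacobiTheta₂_mul_jacobiTheta₂ (τ / 2) (τ / 2) hτ
  have hshift :
      jacobiTheta₂ (2 * τ) (2 * τ) = cexp (-(2 * π * I * τ)) * jacobiTheta₂ 0 (2 * τ) := by
    have := jacobiTheta₂_add_left' 0 (2 * τ)
    rw [zero_add, mul_zero, add_zero] at this
    rw [this]
    congr 2; ring
  rw [add_halves, sub_self, zero_add, show τ + τ = 2 * τ by ring, hshift] at h
  rw [sq, h, show 2 * π * I * (τ / 2) + π * I * τ = 2 * π * I * τ by ring]
  have hcancel : cexp (2 * π * I * τ) * cexp (-(2 * π * I * τ)) = 1 := by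
    rw [← Complex.exp_add, add_neg_cancel, Complex.exp_zero]
  linear_combination jacobiTheta₂ 0 (2 * τ) * jacobiTheta₂ τ (2 * τ) * hcancel

lemma tsum_exp_mul_sq_eq_jacobiTheta₂_zero (τ : ℂ) :
    ∑' n : ℤ, cexp (π * I * τ * (n : ℂ) ^ 2) = jacobiTheta₂ 0 τ :=
  tsum_congr fun n ↦ by rw [jacobiTheta₂_term]; congr 1; ring

lemma tsum_neg_one_zpow_mul_exp_mul_sq_eq_jacobiTheta₂_one_half (τ : ℂ) :
    ∑' n : ℤ, (-1 : ℂ) ^ n * cexp (π * I * τ * (n : ℂ) ^ 2) = jacobiTheta₂ (1 / 2) τ :=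
  tsum_congr fun n ↦ by
    rw [jacobiTheta₂_term, Complex.exp_add, show 2 * π * I * n * (1 / 2 : ℂ) = n * (π * I) by ring,
      Complex.exp_int_mul, Complex.exp_pi_mul_I]
    congr 2; ring

lemma tsum_exp_mul_add_half_sq_eq_jacobiTheta₂_half (τ : ℂ) :
    ∑' n : ℤ, cexp (π * I * τ * ((n : ℂ) + 1 / 2) ^ 2) =
      cexp (π * I * τ / 4) * jacobiTheta₂ (τ / 2) τ := by
  rw [jacobiTheta₂, ← tsum_mul_left]
  refine tsum_congr fun n ↦ ?_
  rw [jacobiTheta₂_term, ← Complex.exp_add]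
  congr 1; ring

/-- Jacobi's identity `ϑ[0,0]⁴ = ϑ[0,1]⁴ + ϑ[1,0]⁴` on the upper half plane. -/
theorem jacobi_quartic_identity (τ : ℂ) (hτ : 0 < τ.im) :
    (∑' n : ℤ, Complex.exp ((Real.pi : ℂ) * Complex.I * τ * (n : ℂ) ^ 2)) ^ 4 =
      (∑' n : ℤ, (-1 : ℂ) ^ n * Complex.exp ((Real.pi : ℂ) * Complex.I * τ * (n : ℂ) ^ 2)) ^ 4 +
      (∑' n : ℤ, Complex.exp ((Real.pi : ℂ) * Complex.I * τ * ((n : ℂ) + 1 / 2) ^ 2)) ^ 4 := by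
  rw [tsum_exp_mul_sq_eq_jacobiTheta₂_zero,
    tsum_neg_one_zpow_mul_exp_mul_sq_eq_jacobiTheta₂_one_half,
    tsum_exp_mul_add_half_sq_eq_jacobiTheta₂_half]
  have h00 := jacobiTheta₂_zero_sq hτ
  have h01 := jacobiTheta₂_one_half_sq hτ
  have h10 := jacobiTheta₂_half_sq hτ
  set X := jacobiTheta₂ 0 (2 * τ)
  set Y := jacobiTheta₂ τ (2 * τ)
  set q := cexp (π * I * τ)
  have hq : cexp (π * I * τ / 4) ^ 4 = q := by
    rw [← Complex.exp_nat_mul]; congr 1; push_cast; ring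
  linear_combination (jacobiTheta₂ 0 τ ^ 2 + X ^ 2 + q * Y ^ 2) * h00 -
    (jacobiTheta₂ (1 / 2) τ ^ 2 + X ^ 2 - q * Y ^ 2) * h01 -
    cexp (π * I * τ / 4) ^ 4 * (jacobiTheta₂ (τ / 2) τ ^ 2 + 2 * X * Y) * h10 -
    4 * X ^ 2 * Y ^ 2 * hq
end

section
/- For every g ≥ 1 and every Göpel group G ⊆ 𝔽₂^{2g}, there is exactly one coset M = a + G of G in 𝔽₂^{2g} all of whose elements are even theta characteristics. -/
/-!
Write `e(a, b) = Σ aᵢbᵢ` (`TChar.parity`). Since `e(m + n) = e(m) + e(n) + ⟨m, n⟩`, the coset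
`a + G` is even exactly when `e(a) = 0` and `⟨a, ·⟩ = e` on `G`. Two such `a` differ by an element
of `G^⊥`, which is `G` by maximality. For existence, evaluate `Σ_v Σ_{x ∈ G} (-1)^{e(v + x)}` in two
ways: translating `v` gives `|G| · Σ_v (-1)^{e(v)} = |G| · 2^g`, while `x ↦ e(x) + ⟨v, x⟩` is a
character of the isotropic `G`, so the inner sum vanishes unless `⟨v, ·⟩ = e` on `G`, where it is
`|G| (-1)^{e(v)}`. Hence `Σ (-1)^{e(v)}` over those `v` is `2^g > 0`, and one of them has `e(v) = 0`.
-/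

open BigOperators

/-- Theta characteristics in genus `g`: pairs `(a, b)` with `a, b ∈ 𝔽₂^g`. -/
abbrev TChar (g : ℕ) := (Fin g → ZMod 2) × (Fin g → ZMod 2)

/-- A theta characteristic `(a, b)` is even if `Σᵢ aᵢbᵢ = 0` in `𝔽₂`. -/
def IsEvenChar {g : ℕ} (m : TChar g) : Prop := ∑ i, m.1 i * m.2 i = 0

/-- The standard symplectic pairing `⟨m,n⟩ = aᵀβ + bᵀα` on `𝔽₂^{2g}`. -/
def symplecticPairing {g : ℕ} (m n : TChar g) : ZMod 2 :=
  ∑ i, (m.1 i * n.2 i + m.2 i * n.1 i)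

/-- A subspace is totally isotropic if the symplectic pairing vanishes on it. -/
def IsIsotropic {g : ℕ} (G : Submodule (ZMod 2) (TChar g)) : Prop :=
  ∀ m ∈ G, ∀ n ∈ G, symplecticPairing m n = 0

/-- A Göpel group is a maximal totally isotropic subspace of `𝔽₂^{2g}`. -/
def IsGopel {g : ℕ} (G : Submodule (ZMod 2) (TChar g)) : Prop :=
  IsIsotropic G ∧ ∀ G' : Submodule (ZMod 2) (TChar g), IsIsotropic G' → G ≤ G' → G' = G

namespace TChar

variable {g : ℕ}

def parity (m : TChar g) : ZMod 2 := m.1 ⬝ᵥ m.2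

lemma isEvenChar_iff (m : TChar g) : IsEvenChar m ↔ parity m = 0 := Iff.rfl

lemma symplecticPairing_eq (m n : TChar g) :
    symplecticPairing m n = m.1 ⬝ᵥ n.2 + m.2 ⬝ᵥ n.1 :=
  Finset.sum_add_distrib

lemma symplecticPairing_comm (m n : TChar g) : symplecticPairing m n = symplecticPairing n m := by
  rw [symplecticPairing_eq, symplecticPairing_eq, dotProduct_comm m.1, dotProduct_comm m.2,
    add_comm]

lemma symplecticPairing_self (m : TChar g) : symplecticPairing m m = 0 := by
  rw [symplecticPairing_eq, dotProduct_comm m.2, CharTwo.add_self_eq_zero]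

lemma parity_add (m n : TChar g) :
    parity (m + n) = parity m + parity n + symplecticPairing m n := by
  simp only [parity, symplecticPairing_eq, Prod.fst_add, Prod.snd_add, add_dotProduct,
    dotProduct_add, dotProduct_comm n.1 m.2]
  ring

def symplecticForm (g : ℕ) : LinearMap.BilinForm (ZMod 2) (TChar g) :=
  (dotProductBilin (ZMod 2) (ZMod 2)).compl₁₂ (LinearMap.fst _ _ _) (LinearMap.snd _ _ _) +
    (dotProductBilin (ZMod 2) (ZMod 2)).compl₁₂ (LinearMap.snd _ _ _) (LinearMap.fst _ _ _)

@[simp]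
lemma symplecticForm_apply (m n : TChar g) : symplecticForm g m n = symplecticPairing m n :=
  (symplecticPairing_eq m n).symm

end TChar

open TChar

def signChar : AddChar (ZMod 2) ℤ := AddChar.zmodChar 2 (by norm_num : (-1 : ℤ) ^ 2 = 1)

lemma signChar_apply (c : ZMod 2) : signChar c = (-1) ^ c.val := AddChar.zmodChar_apply _ c

lemma signChar_eq_one_iff {c : ZMod 2} : signChar c = 1 ↔ c = 0 := by
  rw [signChar_apply]; revert c; decide

lemma signChar_pos_iff {c : ZMod 2} : 0 < signChar c ↔ c = 0 := by
  rw [signChar_apply]; revert c; decide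

lemma sum_signChar_comp {A : Type*} [AddCommGroup A] [Fintype A] (φ : A →+ ZMod 2)
    [Decidable (φ = 0)] : ∑ x, signChar (φ x) = if φ = 0 then (Fintype.card A : ℤ) else 0 := by
  have hψ : signChar.compAddMonoidHom φ = 0 ↔ φ = 0 := by
    rw [AddChar.eq_zero_iff, DFunLike.ext_iff]
    simp only [AddChar.compAddMonoidHom_apply, signChar_eq_one_iff, AddMonoidHom.zero_apply]
  simpa only [hψ, AddChar.compAddMonoidHom_apply] using (signChar.compAddMonoidHom φ).sum_eq_ite

lemma sum_signChar_dotProduct (g : ℕ) (a : Fin g → ZMod 2) :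
    ∑ b, signChar (a ⬝ᵥ b) = if a = 0 then 2 ^ g else 0 := by
  classical
  have h := sum_signChar_comp (dotProductBilin (ZMod 2) (ZMod 2) a).toAddMonoidHom
  have hφ : (dotProductBilin (ZMod 2) (ZMod 2) a).toAddMonoidHom = 0 ↔ a = 0 := by
    rw [← dotProduct_eq_zero_iff, DFunLike.ext_iff]
    rfl
  simpa [hφ] using h

lemma TChar.sum_signChar_parity (g : ℕ) : ∑ m : TChar g, signChar (parity m) = 2 ^ g := by
  simp [Fintype.sum_prod_type, parity, sum_signChar_dotProduct]

section Isotropic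

variable {g : ℕ} {G : Submodule (ZMod 2) (TChar g)}

lemma forall_isEvenChar_add_iff (a : TChar g) :
    (∀ x ∈ G, IsEvenChar (a + x)) ↔
      parity a = 0 ∧ ∀ x ∈ G, symplecticPairing a x = parity x := by
  simp only [isEvenChar_iff, parity_add]
  refine ⟨fun h => ?_, fun ⟨ha, h⟩ x hx => by rw [ha, h x hx, zero_add, CharTwo.add_self_eq_zero]⟩
  have ha : parity a = 0 := by simpa [parity, ← symplecticForm_apply] using h 0 G.zero_mem
  refine ⟨ha, fun x hx => ?_⟩
  rw [eq_comm, ← CharTwo.add_eq_zero, ← h x hx, ha, zero_add]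

lemma IsIsotropic.sup_span_singleton (hG : IsIsotropic G) {v : TChar g}
    (hv : ∀ x ∈ G, symplecticPairing v x = 0) :
    IsIsotropic (G ⊔ Submodule.span (ZMod 2) {v}) := by
  have hv' : ∀ x ∈ G, symplecticPairing x v = 0 := fun x hx => by
    rw [symplecticPairing_comm, hv x hx]
  intro m hm n hn
  obtain ⟨x, hx, _, hcv, rfl⟩ := Submodule.mem_sup.1 hm
  obtain ⟨y, hy, _, hdv, rfl⟩ := Submodule.mem_sup.1 hn
  obtain ⟨c, rfl⟩ := Submodule.mem_span_singleton.1 hcv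
  obtain ⟨d, rfl⟩ := Submodule.mem_span_singleton.1 hdv
  simp only [← symplecticForm_apply, map_add, map_smul, LinearMap.add_apply,
    LinearMap.smul_apply, smul_eq_mul]
  simp [hG x hx y hy, hv y hy, hv' x hx, symplecticPairing_self]

lemma IsGopel.mem_of_forall_symplecticPairing_eq_zero (hG : IsGopel G) {v : TChar g}
    (hv : ∀ x ∈ G, symplecticPairing v x = 0) : v ∈ G := by
  rw [← hG.2 _ (hG.1.sup_span_singleton hv) le_sup_left]
  exact Submodule.mem_sup_right (Submodule.mem_span_singleton_self v)

open Classical in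
lemma IsIsotropic.sum_signChar_parity_add (hG : IsIsotropic G) [Fintype G] (v : TChar g) :
    ∑ x : G, signChar (parity (v + (x : TChar g))) =
      if ∀ x ∈ G, symplecticPairing v x = parity x then signChar (parity v) * Fintype.card G
      else 0 := by
  let φ : G →+ ZMod 2 := AddMonoidHom.mk' (fun x => parity (x : TChar g) + symplecticPairing v x)
    fun x y => by
      simp only [Submodule.coe_add, parity_add, hG x x.2 y y.2, ← symplecticForm_apply, map_add]
      ring
  have hφ : φ = 0 ↔ ∀ x ∈ G, symplecticPairing v x = parity x := by
    simp only [DFunLike.ext_iff, AddMonoidHom.zero_apply, Subtype.forall, φ,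
      AddMonoidHom.mk'_apply, CharTwo.add_eq_zero, eq_comm (a := parity _)]
  have hsplit (x : G) : parity (v + (x : TChar g)) = parity v + φ x := by
    simp only [parity_add, φ, AddMonoidHom.mk'_apply]
    ring
  simp only [hsplit, AddChar.map_add_eq_mul, ← Finset.mul_sum, sum_signChar_comp, hφ, mul_ite,
    mul_zero]

lemma IsIsotropic.exists_parity_eq_zero_symplecticPairing_eq (hG : IsIsotropic G) :
    ∃ w : TChar g, parity w = 0 ∧ ∀ x ∈ G, symplecticPairing w x = parity x := by
  classical
  set T := Finset.univ.filter fun v : TChar g => ∀ x ∈ G, symplecticPairing v x = parity x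
  have hcount : (Fintype.card G : ℤ) * ∑ v ∈ T, signChar (parity v) = Fintype.card G * 2 ^ g :=
    calc
      _ = ∑ v : TChar g, ∑ x : G, signChar (parity (v + (x : TChar g))) := by
        rw [Finset.mul_sum, Finset.sum_filter]
        refine Finset.sum_congr rfl fun v _ => ?_
        rw [hG.sum_signChar_parity_add]
        split_ifs <;> ring
      _ = ∑ x : G, ∑ v : TChar g, signChar (parity (v + (x : TChar g))) := Finset.sum_comm
      _ = ∑ _x : G, ∑ v : TChar g, signChar (parity v) :=
        Finset.sum_congr rfl fun x _ =>
          Equiv.sum_comp (Equiv.addRight (x : TChar g)) fun v => signChar (parity v)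
      _ = _ := by simp only [sum_signChar_parity, Finset.sum_const, Finset.card_univ, nsmul_eq_mul]
  have hpos : ∑ _v ∈ T, (0 : ℤ) < ∑ v ∈ T, signChar (parity v) := by
    rw [Finset.sum_const_zero, mul_left_cancel₀ (by positivity) hcount]
    positivity
  obtain ⟨w, hwT, hw⟩ := Finset.exists_lt_of_sum_lt hpos
  exact ⟨w, signChar_pos_iff.1 hw, (Finset.mem_filter.1 hwT).2⟩

end Isotropic

theorem gopel_unique_even_coset_general (g : ℕ) (G : Submodule (ZMod 2) (TChar g))
    (hG : IsGopel G) :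
    ∃! M : Set (TChar g),
      (∃ a : TChar g, M = (fun x => a + x) '' (G : Set (TChar g))) ∧ ∀ m ∈ M, IsEvenChar m := by
  have hcoset (a : TChar g) : (∀ m ∈ (fun x => a + x) '' (G : Set (TChar g)), IsEvenChar m) ↔
      parity a = 0 ∧ ∀ x ∈ G, symplecticPairing a x = parity x :=
    Set.forall_mem_image.trans (forall_isEvenChar_add_iff a)
  obtain ⟨w, hw⟩ := hG.1.exists_parity_eq_zero_symplecticPairing_eq
  refine ⟨_, ⟨⟨w, rfl⟩, (hcoset w).2 hw⟩, ?_⟩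
  rintro _ ⟨⟨a, rfl⟩, ha⟩
  have hdiff : -a + w ∈ G := hG.mem_of_forall_symplecticPairing_eq_zero fun x hx => by
    rw [← symplecticForm_apply, map_add, map_neg, LinearMap.add_apply, LinearMap.neg_apply,
      symplecticForm_apply, symplecticForm_apply, ((hcoset a).1 ha).2 x hx, hw.2 x hx,
      neg_add_cancel]
  exact (leftAddCoset_eq_iff G.toAddSubgroup).2 hdiff

/-- Every Göpel group has exactly one coset `M = a + G` consisting entirely of
even theta characteristics. -/
theorem gopel_unique_even_coset (g : ℕ) (hg : 1 ≤ g) (G : Submodule (ZMod 2) (TChar g))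
    (hG : IsGopel G) :
    ∃! M : Set (TChar g),
      (∃ a : TChar g, M = (fun x => a + x) '' (G : Set (TChar g))) ∧ ∀ m ∈ M, IsEvenChar m :=
  gopel_unique_even_coset_general g G hG
end

section
/- For every matrix (a b; c d) ∈ SL(2,ℤ) congruent to the identity matrix modulo 2 and every τ in the complex upper half plane, one has ϑ[0,0]((aτ+b)/(cτ+d))⁴ = (cτ+d)² · ϑ[0,0](τ)⁴; that is, ϑ[0,0]⁴ is a modular form of weight 2 with trivial multiplier on the principal congruence subgroup Γ(2). -/
open Complex

/-- The genus one theta nullwert `ϑ[0,0](τ) = Σ_{n∈ℤ} exp(πiτn²)`. -/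
noncomputable def theta00 (τ : ℂ) : ℂ :=
  ∑' n : ℤ, Complex.exp ((Real.pi : ℂ) * Complex.I * τ * (n : ℂ) ^ 2)

/-!
`ϑ⁴` is invariant under the weight 2 slash action of `T²` (since `ϑ(τ + 2) = ϑ(τ)`) and of `-1`,
and anti-invariant under `S` (since `ϑ(-1/τ)² = -iτ ϑ(τ)²`); hence it is invariant under
`S T² S⁻¹`. A Euclidean descent on the first column shows that `-1`, `T²` and `S T² S⁻¹`
generate `Γ(2)`.
-/

open UpperHalfPlane ModularGroup Matrix.SpecialLinearGroup CongruenceSubgroup ModularForm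
open scoped MatrixGroups

def slashStabilizer (k : ℤ) (f : ℍ → ℂ) : Subgroup SL(2, ℤ) where
  carrier := {γ | f ∣[k] γ = f}
  mul_mem' {γ δ} hγ hδ := by
    change f ∣[k] (γ * δ) = f
    rw [SlashAction.slash_mul, hγ, hδ]
  one_mem' := SlashAction.slash_one k f
  inv_mem' {γ} hγ := by
    calc f ∣[k] γ⁻¹ = (f ∣[k] γ) ∣[k] γ⁻¹ := by rw [hγ]
      _ = f := by rw [← SlashAction.slash_mul, mul_inv_cancel, SlashAction.slash_one]

lemma mem_slashStabilizer {k : ℤ} {f : ℍ → ℂ} {γ : SL(2, ℤ)} :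
    γ ∈ slashStabilizer k f ↔ f ∣[k] γ = f :=
  Iff.rfl

lemma neg_one_mem_slashStabilizer {k : ℤ} (hk : Even k) (f : ℍ → ℂ) :
    -1 ∈ slashStabilizer k f := by
  ext τ
  rw [slash_action_eq'_iff]
  simp [hk.neg_one_zpow]

lemma conj_mem_slashStabilizer_of_slash_eq_neg {k : ℤ} {f : ℍ → ℂ} {σ γ : SL(2, ℤ)}
    (hσ : f ∣[k] σ = -f) (hγ : γ ∈ slashStabilizer k f) : σ * γ * σ⁻¹ ∈ slashStabilizer k f := by
  have hσ_inv : (-f) ∣[k] σ⁻¹ = f := by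
    rw [← hσ, ← SlashAction.slash_mul, mul_inv_cancel, SlashAction.slash_one]
  rw [mem_slashStabilizer, SlashAction.slash_mul, SlashAction.slash_mul, hσ,
    SlashAction.neg_slash, mem_slashStabilizer.mp hγ, hσ_inv]

lemma exists_natAbs_add_two_mul_lt {a c : ℤ} (hc : c ≠ 0) (h : c.natAbs < a.natAbs) :
    ∃ ε : ℤ, (a + 2 * ε * c).natAbs < a.natAbs := by
  rcases (by omega : (a + 2 * c).natAbs < a.natAbs ∨ (a - 2 * c).natAbs < a.natAbs) with h | h
  exacts [⟨1, by simpa using h⟩, ⟨-1, by simpa [← sub_eq_add_neg] using h⟩]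

namespace ModularGroup

lemma T_zpow_mul_apply_zero_zero (n : ℤ) (g : SL(2, ℤ)) :
    (T ^ n * g) 0 0 = g 0 0 + n * g 1 0 := by
  simp [coe_T_zpow, Matrix.mul_apply, Fin.sum_univ_two]

lemma conj_S_T_zpow_mul_apply_zero_zero (n : ℤ) (g : SL(2, ℤ)) :
    (S * T ^ n * S⁻¹ * g) 0 0 = g 0 0 := by
  simp [coe_T_zpow, S_inv, Matrix.vecMul, dotProduct, Fin.sum_univ_two]

lemma conj_S_T_zpow_mul_apply_one_zero (n : ℤ) (g : SL(2, ℤ)) :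
    (S * T ^ n * S⁻¹ * g) 1 0 = g 1 0 - n * g 0 0 := by
  simp [coe_T_zpow, S_inv, Matrix.vecMul, dotProduct, Fin.sum_univ_two]
  ring

lemma eq_T_zpow_or_neg_of_apply_one_zero_eq_zero {g : SL(2, ℤ)} (hc : g 1 0 = 0) :
    g = T ^ g 0 1 ∨ g = -T ^ (-g 0 1) := by
  have hdet : g 0 0 * g 1 1 = 1 := by
    have h := g.det_coe
    rwa [Matrix.det_fin_two, hc, mul_zero, sub_zero] at h
  rcases Int.eq_one_or_neg_one_of_mul_eq_one' hdet with ⟨ha, hd⟩ | ⟨ha, hd⟩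
  · left
    ext i j
    fin_cases i <;> fin_cases j <;> simp [coe_T_zpow, ha, hc, hd]
  · right
    ext i j
    fin_cases i <;> fin_cases j <;> simp [coe_T_zpow, ha, hc, hd]

end ModularGroup

namespace CongruenceSubgroup

theorem Gamma_two_le_of_mem {H : Subgroup SL(2, ℤ)} (hneg : -1 ∈ H) (hT : T ^ 2 ∈ H)
    (hL : S * T ^ 2 * S⁻¹ ∈ H) : Γ(2) ≤ H := by
  have hT_zpow (m : ℤ) : T ^ (2 * m) ∈ H := by
    rw [zpow_mul]
    exact zpow_mem (by exact_mod_cast hT) m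
  have hL_zpow (m : ℤ) : S * T ^ (2 * m) * S⁻¹ ∈ H := by
    rw [zpow_mul, ← conj_zpow]
    exact zpow_mem (by exact_mod_cast hL) m
  have hT_Gamma (m : ℤ) : T ^ (2 * m) ∈ Γ(2) :=
    ModularGroup_T_pow_mem_Gamma 2 _ (dvd_mul_right 2 m)
  intro g hg
  induction hn : (g 0 0).natAbs + (g 1 0).natAbs using Nat.strong_induction_on generalizing g with
  | _ n ih =>
  obtain ⟨ha, hb, hc, -⟩ := Gamma_mem.mp hg
  rw [ZMod.intCast_eq_one_iff_odd, Int.odd_iff] at ha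
  rw [ZMod.intCast_eq_zero_iff_even] at hb
  rw [ZMod.intCast_eq_zero_iff_even, Int.even_iff] at hc
  rcases eq_or_ne (g 1 0) 0 with hc0 | hc0
  · obtain ⟨m, hm⟩ := hb
    rw [← two_mul] at hm
    rcases eq_T_zpow_or_neg_of_apply_one_zero_eq_zero hc0 with hg' | hg'
    · rw [hg', hm]
      exact hT_zpow m
    · rw [hg', hm, ← neg_one_mul, ← mul_neg]
      exact mul_mem hneg (hT_zpow (-m))
  -- `g 0 0` is odd and `g 1 0` even, so they differ in size and the larger one can be shrunk
  -- by adding or subtracting twice the smaller one.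
  rcases lt_or_gt_of_ne (show (g 1 0).natAbs ≠ (g 0 0).natAbs by omega) with hlt | hlt
  · obtain ⟨ε, hε⟩ := exists_natAbs_add_two_mul_lt hc0 hlt
    refine (H.mul_mem_cancel_left (hT_zpow ε)).mp (ih _ ?_ (mul_mem (hT_Gamma ε) hg) rfl)
    rw [T_zpow_mul_apply_zero_zero, T_pow_mul_apply_one]
    omega
  · obtain ⟨ε, hε⟩ := exists_natAbs_add_two_mul_lt (by omega) hlt
    have hL_Gamma : S * T ^ (2 * -ε) * S⁻¹ ∈ Γ(2) :=
      (Gamma_normal 2).conj_mem _ (hT_Gamma (-ε)) S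
    refine (H.mul_mem_cancel_left (hL_zpow (-ε))).mp (ih _ ?_ (mul_mem hL_Gamma hg) rfl)
    rw [conj_S_T_zpow_mul_apply_zero_zero, conj_S_T_zpow_mul_apply_one_zero, mul_neg, neg_mul,
      sub_neg_eq_add]
    omega

end CongruenceSubgroup

lemma jacobiTheta_pow_four_slash_S :
    (fun τ : ℍ ↦ jacobiTheta τ ^ 4) ∣[(2 : ℤ)] S = -fun τ : ℍ ↦ jacobiTheta τ ^ 4 := by
  ext τ
  have hroot : ((-Complex.I * τ) ^ (1 / 2 : ℂ)) ^ 4 = -(τ : ℂ) ^ 2 := by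
    rw [← cpow_nat_mul, show ((4 : ℕ) : ℂ) * (1 / 2) = 2 by norm_num, cpow_ofNat, mul_pow,
      neg_sq, I_sq]
    ring
  rw [SL_slash_apply, jacobiTheta_S_smul, mul_pow, hroot, denom_S]
  field_simp [τ.ne_zero]
  simp

lemma jacobiTheta_pow_four_slash_T_sq :
    (fun τ : ℍ ↦ jacobiTheta τ ^ 4) ∣[(2 : ℤ)] (T ^ 2) = fun τ : ℍ ↦ jacobiTheta τ ^ 4 := by
  ext τ
  rw [slash_action_eq'_iff, jacobiTheta_T_sq_smul]
  simp [show (T ^ 2) 1 0 = 0 by decide, show (T ^ 2) 1 1 = 1 by decide]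

theorem Gamma_two_le_slashStabilizer_jacobiTheta_pow_four :
    Γ(2) ≤ slashStabilizer 2 (fun τ : ℍ ↦ jacobiTheta τ ^ 4) :=
  Gamma_two_le_of_mem (neg_one_mem_slashStabilizer even_two _) jacobiTheta_pow_four_slash_T_sq
    (conj_mem_slashStabilizer_of_slash_eq_neg jacobiTheta_pow_four_slash_S
      jacobiTheta_pow_four_slash_T_sq)

lemma theta00_eq_jacobiTheta (τ : ℂ) : theta00 τ = jacobiTheta τ :=
  tsum_congr fun n ↦ congrArg Complex.exp (by ring)

/-- `ϑ[0,0]⁴` is a modular form of weight 2 with trivial multiplier on `Γ(2)`: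
for every matrix `(a b; c d) ∈ SL(2,ℤ)` congruent to the identity mod 2 and every
`τ` in the upper half plane, `ϑ[0,0]((aτ+b)/(cτ+d))⁴ = (cτ+d)² ϑ[0,0](τ)⁴`. -/
theorem theta00_pow_four_weight_two (a b c d : ℤ) (hdet : a * d - b * c = 1)
    (ha : (a : ZMod 2) = 1) (hb : (b : ZMod 2) = 0) (hc : (c : ZMod 2) = 0)
    (hd : (d : ZMod 2) = 1) (τ : ℂ) (hτ : 0 < τ.im) :
    theta00 (((a : ℂ) * τ + b) / ((c : ℂ) * τ + d)) ^ 4 =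
      ((c : ℂ) * τ + d) ^ 2 * theta00 τ ^ 4 := by
  let γ : SL(2, ℤ) := ⟨!![a, b; c, d], by rw [Matrix.det_fin_two_of, hdet]⟩
  have hγ : γ ∈ Γ(2) := Gamma_mem.mpr ⟨ha, hb, hc, hd⟩
  have hslash := (slash_action_eq'_iff 2 _ γ ⟨τ, hτ⟩).mp
    (congrFun (Gamma_two_le_slashStabilizer_jacobiTheta_pow_four hγ) ⟨τ, hτ⟩)
  rw [coe_specialLinearGroup_apply] at hslash
  simpa [theta00_eq_jacobiTheta, γ] using hslash
end

section
/- For every g ≥ 1, the assignment M{m} = (Mᵀ)⁻¹m + (diag(CDᵀ), diag(ABᵀ)) mod 2 defines a group action of Sp(2g,ℤ) on 𝔽₂^{2g} (i.e., the identity acts trivially and (MN){m} = M{N{m}} for all M,N ∈ Sp(2g,ℤ) and m ∈ 𝔽₂^{2g}), and this action maps even characteristics to even characteristics and odd characteristics to odd characteristics. -/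
open BigOperators Matrix

/-- `2g × 2g` integral matrices, written in `g × g` blocks. -/
abbrev SpMat (g : ℕ) := Matrix (Fin g ⊕ Fin g) (Fin g ⊕ Fin g) ℤ

/-- The standard symplectic form `J = (0 −E; E 0)`. -/
def Jmat (g : ℕ) : SpMat g := Matrix.fromBlocks 0 (-1) 1 0

/-- `M ∈ Sp(2g,ℤ)`, i.e. `MᵀJM = J`. -/
def IsSymplectic {g : ℕ} (M : SpMat g) : Prop := Mᵀ * Jmat g * M = Jmat g

/-- The action `M{m} = (Mᵀ)⁻¹ m + (diag(CDᵀ), diag(ABᵀ))` (mod 2) of a symplectic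
matrix `M = (A B; C D)` on theta characteristics. -/
noncomputable def charAct {g : ℕ} (M : SpMat g) (m : TChar g) : TChar g :=
  let Mb : Matrix (Fin g ⊕ Fin g) (Fin g ⊕ Fin g) (ZMod 2) := M.map (Int.cast)
  let v : (Fin g ⊕ Fin g) → ZMod 2 := (Mbᵀ)⁻¹.mulVec (Sum.elim m.1 m.2)
  (fun i => v (Sum.inl i) + (((M.toBlocks₂₁ * M.toBlocks₂₂ᵀ) i i : ℤ) : ZMod 2),
   fun i => v (Sum.inr i) + (((M.toBlocks₁₁ * M.toBlocks₁₂ᵀ) i i : ℤ) : ZMod 2))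

section ThetaCharAux
open Finset

lemma zmod2_mul_self : ∀ x : ZMod 2, x * x = x := by decide

lemma sum_symm_offdiag {κ : Type*} [Fintype κ] [DecidableEq κ]
    (f : κ → κ → ZMod 2) (hf : ∀ i k, f i k = f k i) :
    ∑ i, ∑ k, f i k = ∑ i, f i i := by
  classical
  have h : ∑ i, ∑ k, f i k = ∑ p ∈ (univ ×ˢ univ : Finset (κ × κ)), f p.1 p.2 := by
    rw [Finset.sum_product]
  rw [h]
  have hsplit : (univ ×ˢ univ : Finset (κ × κ)) =
      ((univ ×ˢ univ).filter (fun p => p.1 = p.2)) ∪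
      ((univ ×ˢ univ).filter (fun p => ¬ p.1 = p.2)) := by
    rw [Finset.filter_union_filter_not_eq]
  rw [hsplit, Finset.sum_union (Finset.disjoint_filter_filter_not _ _ _)]
  have h2 : ∑ p ∈ ((univ ×ˢ univ : Finset (κ × κ)).filter (fun p => ¬ p.1 = p.2)),
      f p.1 p.2 = 0 := by
    apply Finset.sum_involution (fun p _ => Prod.swap p)
    · intro p hp
      rw [hf p.1 p.2]
      exact CharTwo.add_self_eq_zero _
    · intro p hp _
      simp only [Finset.mem_filter] at hp
      intro h
      exact hp.2 (congrArg Prod.fst h).symm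
    · intro p hp
      simp only [Finset.mem_filter, Finset.mem_product, Finset.mem_univ, true_and,
        Prod.fst_swap, Prod.snd_swap] at hp ⊢
      exact fun h => hp h.symm
    · intro p hp; rfl
  rw [h2, add_zero]
  rw [Finset.sum_filter]
  rw [Finset.sum_product]
  congr 1; ext i
  simp

lemma quad_symm {κ : Type*} [Fintype κ] [DecidableEq κ] (T : Matrix κ κ (ZMod 2))
    (hT : Tᵀ = T) (u : κ → ZMod 2) :
    u ⬝ᵥ T *ᵥ u = ∑ i, T i i * u i := by
  have h1 : u ⬝ᵥ T *ᵥ u = ∑ i, ∑ k, u i * (T i k * u k) := by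
    simp [dotProduct, mulVec, Finset.mul_sum]
  rw [h1, sum_symm_offdiag (f := fun i k => u i * (T i k * u k))]
  · apply Finset.sum_congr rfl
    intro i _
    rw [mul_comm (u i), mul_assoc, zmod2_mul_self]
  · intro i k
    have hTik : T k i = T i k := by rw [show T k i = Tᵀ i k from rfl, hT]
    rw [hTik]; ring

section Sg
variable {g : ℕ}

def sg (g : ℕ) : Matrix (Fin g ⊕ Fin g) (Fin g ⊕ Fin g) (ZMod 2) := fromBlocks 0 1 1 0
def spp (g : ℕ) : Matrix (Fin g ⊕ Fin g) (Fin g ⊕ Fin g) (ZMod 2) := fromBlocks 0 1 0 0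

lemma sg_transpose : (sg g)ᵀ = sg g := by
  simp [sg, fromBlocks_transpose]

lemma spp_add_transpose : spp g + (spp g)ᵀ = sg g := by
  simp [spp, sg, fromBlocks_transpose, fromBlocks_add]

lemma sg_mul_sg : sg g * sg g = 1 := by
  simp [sg, fromBlocks_multiply, fromBlocks_one]

lemma sg_mul_spp_mul_sg : sg g * spp g * sg g = (spp g)ᵀ := by
  simp [sg, spp, fromBlocks_multiply, fromBlocks_transpose]

lemma sg_mul_sppT_mul_sg : sg g * (spp g)ᵀ * sg g = spp g := by
  simp [sg, spp, fromBlocks_multiply, fromBlocks_transpose]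

lemma spp_diag (j : Fin g ⊕ Fin g) : spp g j j = 0 := by
  rcases j with i | i <;> simp [spp]

lemma sppT_diag (j : Fin g ⊕ Fin g) : (spp g)ᵀ j j = 0 := by
  rcases j with i | i <;> simp [spp]

lemma sg_mul_apply (X : Matrix (Fin g ⊕ Fin g) (Fin g ⊕ Fin g) (ZMod 2))
    (j k : Fin g ⊕ Fin g) : (sg g * X) j k = X (Sum.swap j) k := by
  rcases j with i | i <;>
    simp [sg, mul_apply, Fintype.sum_sum_type, Matrix.one_apply, Finset.sum_ite_eq]

lemma mul_sg_apply (X : Matrix (Fin g ⊕ Fin g) (Fin g ⊕ Fin g) (ZMod 2))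
    (j k : Fin g ⊕ Fin g) : (X * sg g) j k = X j (Sum.swap k) := by
  rcases k with i | i <;>
    simp [sg, mul_apply, Fintype.sum_sum_type, Matrix.one_apply, Finset.sum_ite_eq]

end Sg

section Core
variable {g : ℕ}

lemma mat_add_self (X : Matrix (Fin g ⊕ Fin g) (Fin g ⊕ Fin g) (ZMod 2)) : X + X = 0 := by
  ext i j
  simp only [Matrix.add_apply, Matrix.zero_apply]
  exact CharTwo.add_self_eq_zero _

lemma quad_entry {κ : Type*} [Fintype κ] (X T : Matrix κ κ (ZMod 2)) (i : κ) :
    (X * T * Xᵀ) i i = (fun k => X i k) ⬝ᵥ T *ᵥ (fun k => X i k) := by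
  simp only [mul_apply, transpose_apply, dotProduct, mulVec, Finset.sum_mul,
    Finset.mul_sum, mul_assoc]
  exact Finset.sum_comm

def Dvec (P : Matrix (Fin g ⊕ Fin g) (Fin g ⊕ Fin g) (ZMod 2)) : (Fin g ⊕ Fin g) → ZMod 2 :=
  fun j => (P * spp g * Pᵀ) (Sum.swap j) (Sum.swap j)

def actF (P : Matrix (Fin g ⊕ Fin g) (Fin g ⊕ Fin g) (ZMod 2))
    (x : (Fin g ⊕ Fin g) → ZMod 2) : (Fin g ⊕ Fin g) → ZMod 2 :=
  (sg g * P * sg g) *ᵥ x + Dvec P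

variable {P Q : Matrix (Fin g ⊕ Fin g) (Fin g ⊕ Fin g) (ZMod 2)}

lemma symp_right (hP : Pᵀ * sg g * P = sg g) : P * sg g * Pᵀ = sg g := by
  have h1 : (sg g * Pᵀ * sg g) * P = 1 := by
    calc (sg g * Pᵀ * sg g) * P = sg g * (Pᵀ * sg g * P) := by
          simp only [Matrix.mul_assoc]
      _ = 1 := by rw [hP, sg_mul_sg]
  have h2 : P * (sg g * Pᵀ * sg g) = 1 := mul_eq_one_comm.mpr h1
  have h3 : P * sg g * Pᵀ * sg g = 1 := by
    calc P * sg g * Pᵀ * sg g = P * (sg g * Pᵀ * sg g) := by simp only [Matrix.mul_assoc]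
      _ = 1 := h2
  calc P * sg g * Pᵀ = P * sg g * Pᵀ * (sg g * sg g) := by rw [sg_mul_sg, Matrix.mul_one]
    _ = (P * sg g * Pᵀ * sg g) * sg g := by simp only [Matrix.mul_assoc]
    _ = sg g := by rw [h3, Matrix.one_mul]

lemma inv_transpose (hP : Pᵀ * sg g * P = sg g) : (Pᵀ)⁻¹ = sg g * P * sg g := by
  apply Matrix.inv_eq_right_inv
  calc Pᵀ * (sg g * P * sg g) = (Pᵀ * sg g * P) * sg g := by simp only [Matrix.mul_assoc]
    _ = 1 := by rw [hP, sg_mul_sg]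

lemma sg_add_sppT : sg g + (spp g)ᵀ = spp g := by
  rw [← spp_add_transpose, add_assoc, mat_add_self, add_zero]

lemma diag_key (R : Matrix (Fin g ⊕ Fin g) (Fin g ⊕ Fin g) (ZMod 2))
    (hR : R + Rᵀ = sg g) (i : Fin g ⊕ Fin g) :
    (P * R * Pᵀ) i i = (P * spp g * Pᵀ) i i + ∑ k, P i k * R k k := by
  have hRT : Rᵀ = R + sg g := by
    calc Rᵀ = (R + R) + Rᵀ := by rw [mat_add_self, zero_add]
      _ = R + (R + Rᵀ) := by rw [add_assoc]
      _ = R + sg g := by rw [hR]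
  have hTsym : (R + spp g)ᵀ = R + spp g := by
    rw [transpose_add, hRT, add_assoc, sg_add_sppT]
  have hsplit : R = spp g + (R + spp g) := by
    rw [← add_assoc, add_comm (spp g) R, add_assoc, mat_add_self, add_zero]
  have hquad : (P * (R + spp g) * Pᵀ) i i = ∑ k, P i k * R k k := by
    rw [quad_entry, quad_symm _ hTsym]
    apply Finset.sum_congr rfl
    intro k _
    rw [Matrix.add_apply, spp_diag, add_zero, mul_comm]
  calc (P * R * Pᵀ) i i = (P * (spp g + (R + spp g)) * Pᵀ) i i := by rw [← hsplit]
    _ = (P * spp g * Pᵀ + P * (R + spp g) * Pᵀ) i i := by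
          rw [Matrix.mul_add, Matrix.add_mul]
    _ = (P * spp g * Pᵀ) i i + ∑ k, P i k * R k k := by
          rw [Matrix.add_apply, hquad]

lemma actF_comp (hP : Pᵀ * sg g * P = sg g) (hQ : Qᵀ * sg g * Q = sg g)
    (x : (Fin g ⊕ Fin g) → ZMod 2) :
    actF (P * Q) x = actF P (actF Q x) := by
  have hQr : Q * sg g * Qᵀ = sg g := symp_right hQ
  have hRsum : (Q * spp g * Qᵀ) + (Q * spp g * Qᵀ)ᵀ = sg g := by
    rw [transpose_mul, transpose_mul, transpose_transpose]
    calc Q * spp g * Qᵀ + Qᵀᵀ * ((spp g)ᵀ * Qᵀ) = Q * (spp g + (spp g)ᵀ) * Qᵀ := by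
          rw [transpose_transpose]
          rw [Matrix.mul_add, Matrix.add_mul]
          simp only [Matrix.mul_assoc]
      _ = sg g := by rw [spp_add_transpose, hQr]
  have hDvec : Dvec (P * Q) = (sg g * P * sg g) *ᵥ Dvec Q + Dvec P := by
    funext j
    have h1 : Dvec (P * Q) j = (P * (Q * spp g * Qᵀ) * Pᵀ) (Sum.swap j) (Sum.swap j) := by
      unfold Dvec
      rw [transpose_mul]
      simp only [Matrix.mul_assoc]
    rw [h1, diag_key _ hRsum]
    rw [Pi.add_apply]
    have h2 : ((sg g * P * sg g) *ᵥ Dvec Q) j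
        = ∑ k, P (Sum.swap j) k * (Q * spp g * Qᵀ) k k := by
      have e1 : ((sg g * P * sg g) *ᵥ Dvec Q) j
          = ∑ k, P (Sum.swap j) (Sum.swap k) * (Q * spp g * Qᵀ) (Sum.swap k) (Sum.swap k) := by
        simp only [mulVec, dotProduct]
        refine Finset.sum_congr rfl fun k _ => ?_
        rw [mul_sg_apply, sg_mul_apply]
        rfl
      rw [e1]
      exact Equiv.sum_comp (Equiv.sumComm (Fin g) (Fin g))
        (fun k => P (Sum.swap j) k * (Q * spp g * Qᵀ) k k)
    rw [h2, add_comm]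
    rfl
  show (sg g * (P * Q) * sg g) *ᵥ x + Dvec (P * Q) = _
  rw [hDvec]
  unfold actF
  rw [Matrix.mulVec_add]
  have hgrp : sg g * (P * Q) * sg g = (sg g * P * sg g) * (sg g * Q * sg g) := by
    calc sg g * (P * Q) * sg g = sg g * P * (sg g * sg g) * Q * sg g := by
          rw [sg_mul_sg, Matrix.mul_one]; simp only [Matrix.mul_assoc]
      _ = (sg g * P * sg g) * (sg g * Q * sg g) := by simp only [Matrix.mul_assoc]
  rw [hgrp, ← Matrix.mulVec_mulVec]
  abel

lemma sg_add_spp : sg g + spp g = (spp g)ᵀ := by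
  rw [← spp_add_transpose, add_comm (spp g), add_assoc, mat_add_self, add_zero]

lemma sppT_sg_sppT : (spp g)ᵀ * sg g * (spp g)ᵀ = (spp g)ᵀ := by
  simp [spp, sg, fromBlocks_transpose, fromBlocks_multiply]

lemma dp_helper (A : Matrix (Fin g ⊕ Fin g) (Fin g ⊕ Fin g) (ZMod 2))
    (x w : (Fin g ⊕ Fin g) → ZMod 2) : x ⬝ᵥ (Aᵀ *ᵥ w) = (A *ᵥ x) ⬝ᵥ w := by
  rw [dotProduct_mulVec, vecMul_transpose]

lemma dp_swap (B : Matrix (Fin g ⊕ Fin g) (Fin g ⊕ Fin g) (ZMod 2))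
    (v u : (Fin g ⊕ Fin g) → ZMod 2) : v ⬝ᵥ (B *ᵥ u) = u ⬝ᵥ (Bᵀ *ᵥ v) := by
  rw [dotProduct_mulVec, dotProduct_comm, mulVec_transpose]

lemma col_quad (Y X : Matrix (Fin g ⊕ Fin g) (Fin g ⊕ Fin g) (ZMod 2)) (k : Fin g ⊕ Fin g) :
    (fun i => Y i k) ⬝ᵥ X *ᵥ (fun i => Y i k) = (Yᵀ * X * Y) k k := by
  have h := quad_entry Yᵀ X k
  rw [transpose_transpose] at h
  rw [h]
  rfl

lemma spp_mulVec (v : (Fin g ⊕ Fin g) → ZMod 2) :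
    spp g *ᵥ v = Sum.elim (fun i => v (Sum.inr i)) (fun _ => 0) := by
  funext j
  rcases j with i | i <;>
    simp [mulVec, dotProduct, spp, Fintype.sum_sum_type, Matrix.one_apply, Finset.sum_ite_eq]

lemma even_sum_eq (x : (Fin g ⊕ Fin g) → ZMod 2) :
    ∑ i, x (Sum.inl i) * x (Sum.inr i) = x ⬝ᵥ spp g *ᵥ x := by
  rw [spp_mulVec]
  unfold dotProduct
  rw [Fintype.sum_sum_type]
  simp

lemma actF_parity (hP : Pᵀ * sg g * P = sg g) (x : (Fin g ⊕ Fin g) → ZMod 2) :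
    actF P x ⬝ᵥ spp g *ᵥ actF P x = x ⬝ᵥ spp g *ᵥ x := by
  have hPr := symp_right hP
  set A : Matrix (Fin g ⊕ Fin g) (Fin g ⊕ Fin g) (ZMod 2) := sg g * P * sg g with hAdef
  have hAT : Aᵀ = sg g * Pᵀ * sg g := by
    rw [hAdef]
    simp only [transpose_mul, transpose_transpose, sg_transpose, Matrix.mul_assoc]
  have hA : Aᵀ * sg g * A = sg g := by
    rw [hAT, hAdef]
    calc sg g * Pᵀ * sg g * sg g * (sg g * P * sg g)
        = sg g * Pᵀ * (sg g * sg g) * (sg g * P * sg g) := by simp only [Matrix.mul_assoc]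
      _ = sg g * Pᵀ * (sg g * P * sg g) := by rw [sg_mul_sg, Matrix.mul_one]
      _ = sg g * (Pᵀ * sg g * P) * sg g := by simp only [Matrix.mul_assoc]
      _ = sg g := by rw [hP, sg_mul_sg, Matrix.one_mul]
  have hAr : A * sg g * Aᵀ = sg g := by
    rw [hAT, hAdef]
    calc sg g * P * sg g * sg g * (sg g * Pᵀ * sg g)
        = sg g * P * (sg g * sg g) * (sg g * Pᵀ * sg g) := by simp only [Matrix.mul_assoc]
      _ = sg g * P * (sg g * Pᵀ * sg g) := by rw [sg_mul_sg, Matrix.mul_one]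
      _ = sg g * (P * sg g * Pᵀ) * sg g := by simp only [Matrix.mul_assoc]
      _ = sg g := by rw [hPr, sg_mul_sg, Matrix.one_mul]
  set W : Matrix (Fin g ⊕ Fin g) (Fin g ⊕ Fin g) (ZMod 2) := A * (spp g)ᵀ * Aᵀ with hWdef
  have hWT' : Wᵀ = A * spp g * Aᵀ := by
    rw [hWdef]
    simp only [transpose_mul, transpose_transpose, Matrix.mul_assoc]
  have hWsum : W + Wᵀ = sg g := by
    rw [hWT', hWdef]
    calc A * (spp g)ᵀ * Aᵀ + A * spp g * Aᵀ = A * ((spp g)ᵀ + spp g) * Aᵀ := by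
          rw [Matrix.mul_add, Matrix.add_mul]
      _ = sg g := by rw [add_comm, spp_add_transpose, hAr]
  have hWT : Wᵀ = W + sg g := by
    calc Wᵀ = (W + W) + Wᵀ := by rw [mat_add_self, zero_add]
      _ = W + (W + Wᵀ) := by rw [add_assoc]
      _ = W + sg g := by rw [hWsum]
  have hdelta : Dvec P = fun j => W j j := by
    funext j
    have h1 : W = sg g * (P * spp g * Pᵀ) * sg g := by
      rw [hWdef, hAT, hAdef]
      calc sg g * P * sg g * (spp g)ᵀ * (sg g * Pᵀ * sg g)
          = sg g * P * (sg g * (spp g)ᵀ * sg g) * Pᵀ * sg g := by simp only [Matrix.mul_assoc]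
        _ = sg g * (P * spp g * Pᵀ) * sg g := by
              rw [sg_mul_sppT_mul_sg]; simp only [Matrix.mul_assoc]
    unfold Dvec
    rw [h1, mul_sg_apply, sg_mul_apply]
  set G : Matrix (Fin g ⊕ Fin g) (Fin g ⊕ Fin g) (ZMod 2) := Aᵀ * spp g * A with hGdef
  have hGT : Gᵀ = G + sg g := by
    have h1 : Gᵀ = Aᵀ * (spp g)ᵀ * A := by
      rw [hGdef]
      simp only [transpose_mul, transpose_transpose, Matrix.mul_assoc]
    have h2 : G + Gᵀ = sg g := by
      rw [h1, hGdef]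
      calc Aᵀ * spp g * A + Aᵀ * (spp g)ᵀ * A = Aᵀ * (spp g + (spp g)ᵀ) * A := by
            rw [Matrix.mul_add, Matrix.add_mul]
        _ = sg g := by rw [spp_add_transpose, hA]
    calc Gᵀ = (G + G) + Gᵀ := by rw [mat_add_self, zero_add]
      _ = G + (G + Gᵀ) := by rw [add_assoc]
      _ = G + sg g := by rw [h2]
  -- (a) the quadratic term
  have e_a : (A *ᵥ x) ⬝ᵥ (spp g *ᵥ (A *ᵥ x)) = x ⬝ᵥ (spp g *ᵥ x) + ∑ k, G k k * x k := by
    have h1 : (A *ᵥ x) ⬝ᵥ (spp g *ᵥ (A *ᵥ x)) = x ⬝ᵥ (G *ᵥ x) := by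
      rw [Matrix.mulVec_mulVec, ← dp_helper, Matrix.mulVec_mulVec, ← Matrix.mul_assoc, hGdef]
    have hsplit : G = spp g + (G + spp g) := by
      rw [← add_assoc, add_comm (spp g) G, add_assoc, mat_add_self, add_zero]
    have hTsym : (G + spp g)ᵀ = G + spp g := by
      rw [transpose_add, hGT, add_assoc, sg_add_sppT]
    have h2 : x ⬝ᵥ ((G + spp g) *ᵥ x) = ∑ k, G k k * x k := by
      rw [quad_symm _ hTsym]
      refine Finset.sum_congr rfl fun k _ => ?_
      rw [Matrix.add_apply, spp_diag, add_zero]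
    rw [h1]
    conv_lhs => rw [hsplit]
    rw [Matrix.add_mulVec, dotProduct_add, h2]
  -- the key diagonal vector identity
  have e_vec : (Aᵀ * sg g) *ᵥ (fun j => W j j) = fun k => G k k := by
    funext k
    have h1 : ((Aᵀ * sg g) *ᵥ (fun j => W j j)) k
        = ∑ i, W i i * (fun i => (sg g * A) i k) i := by
      simp only [mulVec, dotProduct]
      refine Finset.sum_congr rfl fun i _ => ?_
      have he : (Aᵀ * sg g) k i = (sg g * A) i k := by
        have : (sg g * A)ᵀ = Aᵀ * sg g := by rw [transpose_mul, sg_transpose]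
        rw [← this]
        rfl
      rw [he, mul_comm]
    set u : (Fin g ⊕ Fin g) → ZMod 2 := fun i => (sg g * A) i k with hudef
    have hT2sym : (W + (spp g)ᵀ)ᵀ = W + (spp g)ᵀ := by
      rw [transpose_add, hWT, transpose_transpose, add_assoc, sg_add_spp]
    have h2 : ∑ i, W i i * u i = u ⬝ᵥ ((W + (spp g)ᵀ) *ᵥ u) := by
      rw [quad_symm _ hT2sym]
      refine (Finset.sum_congr rfl fun i _ => ?_).symm
      rw [Matrix.add_apply, sppT_diag, add_zero]
    have h3 : u ⬝ᵥ (W *ᵥ u) = 0 := by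
      rw [hudef]
      rw [col_quad]
      have : (sg g * A)ᵀ * W * (sg g * A) = spp g := by
        have hT : (sg g * A)ᵀ = Aᵀ * sg g := by rw [transpose_mul, sg_transpose]
        rw [hT, hWdef]
        calc Aᵀ * sg g * (A * (spp g)ᵀ * Aᵀ) * (sg g * A)
            = (Aᵀ * sg g * A) * (spp g)ᵀ * (Aᵀ * sg g * A) := by simp only [Matrix.mul_assoc]
          _ = sg g * (spp g)ᵀ * sg g := by rw [hA]
          _ = spp g := sg_mul_sppT_mul_sg
      rw [this, spp_diag]
    have h4 : u ⬝ᵥ ((spp g)ᵀ *ᵥ u) = G k k := by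
      rw [hudef, col_quad]
      have : (sg g * A)ᵀ * (spp g)ᵀ * (sg g * A) = G := by
        have hT : (sg g * A)ᵀ = Aᵀ * sg g := by rw [transpose_mul, sg_transpose]
        rw [hT, hGdef]
        calc Aᵀ * sg g * (spp g)ᵀ * (sg g * A)
            = Aᵀ * (sg g * (spp g)ᵀ * sg g) * A := by simp only [Matrix.mul_assoc]
          _ = Aᵀ * spp g * A := by rw [sg_mul_sppT_mul_sg]
      rw [this]
    rw [h1, h2, Matrix.add_mulVec, dotProduct_add, h3, h4, zero_add]
  -- cross terms
  have e_cross : (A *ᵥ x) ⬝ᵥ (spp g *ᵥ (fun j => W j j))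
      + (fun j => W j j) ⬝ᵥ (spp g *ᵥ (A *ᵥ x)) = ∑ k, x k * G k k := by
    rw [dp_swap (spp g) (fun j => W j j) (A *ᵥ x)]
    rw [← dotProduct_add, ← Matrix.add_mulVec, spp_add_transpose]
    rw [← dp_helper, Matrix.mulVec_mulVec, e_vec]
    rfl
  -- q delta = 0
  have e_c : (fun j => W j j) ⬝ᵥ (spp g *ᵥ (fun j => W j j)) = 0 := by
    have hWsg : W * sg g * W = W := by
      rw [hWdef]
      calc A * (spp g)ᵀ * Aᵀ * sg g * (A * (spp g)ᵀ * Aᵀ)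
          = A * (spp g)ᵀ * (Aᵀ * sg g * A) * (spp g)ᵀ * Aᵀ := by simp only [Matrix.mul_assoc]
        _ = A * ((spp g)ᵀ * sg g * (spp g)ᵀ) * Aᵀ := by rw [hA]; simp only [Matrix.mul_assoc]
        _ = A * (spp g)ᵀ * Aᵀ := by rw [sppT_sg_sppT, Matrix.mul_assoc]
    have h1W : W * (sg g * W) = W := by rw [← Matrix.mul_assoc, hWsg]
    have hq : (fun j => W j j) ⬝ᵥ (spp g *ᵥ (fun j => W j j))
        = ∑ i, W (Sum.inl i) (Sum.inl i) * W (Sum.inr i) (Sum.inr i) :=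
      (even_sum_eq (fun j => W j j)).symm
    rw [hq]
    have hXsym : ∀ i j : Fin g, W (Sum.inr i) (Sum.inr j) = W (Sum.inr j) (Sum.inr i) := by
      intro i j
      have h1 : W (Sum.inr j) (Sum.inr i) = Wᵀ (Sum.inr i) (Sum.inr j) := rfl
      rw [h1, hWT, Matrix.add_apply]
      simp [sg]
    have hYsym : ∀ i j : Fin g, W (Sum.inl i) (Sum.inl j) = W (Sum.inl j) (Sum.inl i) := by
      intro i j
      have h1 : W (Sum.inl j) (Sum.inl i) = Wᵀ (Sum.inl i) (Sum.inl j) := rfl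
      rw [h1, hWT, Matrix.add_apply]
      simp [sg]
    have hkey : ∀ i k : Fin g, (∑ j, W (Sum.inr i) (Sum.inr j) * W (Sum.inl j) (Sum.inl k))
        + (∑ j, W (Sum.inr i) (Sum.inl j) * W (Sum.inr j) (Sum.inl k))
        = W (Sum.inr i) (Sum.inl k) := by
      intro i k
      have h2 : (W * (sg g * W)) (Sum.inr i) (Sum.inl k)
          = (∑ j, W (Sum.inr i) (Sum.inl j) * W (Sum.inr j) (Sum.inl k))
            + ∑ j, W (Sum.inr i) (Sum.inr j) * W (Sum.inl j) (Sum.inl k) := by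
        rw [mul_apply, Fintype.sum_sum_type]
        congr 1
        · refine Finset.sum_congr rfl fun j _ => ?_
          simp only [sg_mul_apply, Sum.swap_inl]
        · refine Finset.sum_congr rfl fun j _ => ?_
          simp only [sg_mul_apply, Sum.swap_inr]
      rw [add_comm, ← h2, h1W]
    have hdouble : ∑ i, ∑ k, W (Sum.inr i) (Sum.inr k) * W (Sum.inl k) (Sum.inl i)
        = ∑ i, W (Sum.inr i) (Sum.inr i) * W (Sum.inl i) (Sum.inl i) := by
      apply sum_symm_offdiag
      intro i k
      rw [hXsym i k, hYsym k i]
    have hinner : ∀ i : Fin g, ∑ k, W (Sum.inr i) (Sum.inr k) * W (Sum.inl k) (Sum.inl i)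
        = W (Sum.inr i) (Sum.inl i)
          + ∑ j, W (Sum.inr i) (Sum.inl j) * W (Sum.inr j) (Sum.inl i) := by
      intro i
      have h3 := hkey i i
      calc ∑ k, W (Sum.inr i) (Sum.inr k) * W (Sum.inl k) (Sum.inl i)
          = (∑ k, W (Sum.inr i) (Sum.inr k) * W (Sum.inl k) (Sum.inl i))
            + ((∑ j, W (Sum.inr i) (Sum.inl j) * W (Sum.inr j) (Sum.inl i))
              + (∑ j, W (Sum.inr i) (Sum.inl j) * W (Sum.inr j) (Sum.inl i))) := by
            rw [CharTwo.add_self_eq_zero, add_zero]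
        _ = ((∑ k, W (Sum.inr i) (Sum.inr k) * W (Sum.inl k) (Sum.inl i))
              + (∑ j, W (Sum.inr i) (Sum.inl j) * W (Sum.inr j) (Sum.inl i)))
            + (∑ j, W (Sum.inr i) (Sum.inl j) * W (Sum.inr j) (Sum.inl i)) := by
            rw [← add_assoc]
        _ = W (Sum.inr i) (Sum.inl i)
            + ∑ j, W (Sum.inr i) (Sum.inl j) * W (Sum.inr j) (Sum.inl i) := by rw [h3]
    have hZZ : ∑ i, ∑ j, W (Sum.inr i) (Sum.inl j) * W (Sum.inr j) (Sum.inl i)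
        = ∑ i, W (Sum.inr i) (Sum.inl i) := by
      rw [sum_symm_offdiag (f := fun i j => W (Sum.inr i) (Sum.inl j) * W (Sum.inr j) (Sum.inl i))
        (fun i k => mul_comm _ _)]
      exact Finset.sum_congr rfl fun i _ => zmod2_mul_self _
    calc ∑ i, W (Sum.inl i) (Sum.inl i) * W (Sum.inr i) (Sum.inr i)
        = ∑ i, ∑ k, W (Sum.inr i) (Sum.inr k) * W (Sum.inl k) (Sum.inl i) := by
          rw [hdouble]
          exact Finset.sum_congr rfl fun i _ => mul_comm _ _
      _ = ∑ i, (W (Sum.inr i) (Sum.inl i)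
            + ∑ j, W (Sum.inr i) (Sum.inl j) * W (Sum.inr j) (Sum.inl i)) :=
          Finset.sum_congr rfl fun i _ => hinner i
      _ = (∑ i, W (Sum.inr i) (Sum.inl i))
            + ∑ i, ∑ j, W (Sum.inr i) (Sum.inl j) * W (Sum.inr j) (Sum.inl i) :=
          Finset.sum_add_distrib
      _ = (∑ i, W (Sum.inr i) (Sum.inl i)) + ∑ i, W (Sum.inr i) (Sum.inl i) := by rw [hZZ]
      _ = 0 := CharTwo.add_self_eq_zero _
  -- assemble
  have hact : actF P x = (A *ᵥ x) + (fun j => W j j) := by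
    unfold actF
    rw [← hAdef, hdelta]
  rw [hact]
  rw [Matrix.mulVec_add, dotProduct_add, add_dotProduct, add_dotProduct]
  rw [e_c]
  have : ∑ k, x k * G k k = ∑ k, G k k * x k :=
    Finset.sum_congr rfl fun k _ => mul_comm _ _
  calc (A *ᵥ x) ⬝ᵥ (spp g *ᵥ (A *ᵥ x)) + (fun j => W j j) ⬝ᵥ (spp g *ᵥ (A *ᵥ x))
        + ((A *ᵥ x) ⬝ᵥ (spp g *ᵥ fun j => W j j) + 0)
      = (A *ᵥ x) ⬝ᵥ (spp g *ᵥ (A *ᵥ x))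
        + ((A *ᵥ x) ⬝ᵥ (spp g *ᵥ fun j => W j j)
          + (fun j => W j j) ⬝ᵥ (spp g *ᵥ (A *ᵥ x))) := by ring
    _ = x ⬝ᵥ (spp g *ᵥ x) + ∑ k, G k k * x k + ∑ k, x k * G k k := by
          rw [e_a, e_cross]
    _ = x ⬝ᵥ (spp g *ᵥ x) := by
          rw [this, add_assoc, CharTwo.add_self_eq_zero, add_zero]

end Core


section Bridge
variable {g : ℕ}

lemma Jmap : (Jmat g).map (Int.cast : ℤ → ZMod 2) = sg g := by
  have hneg : (-1 : ZMod 2) = 1 := by decide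
  ext i j
  rcases i with i | i <;> rcases j with j | j <;>
    simp [Jmat, sg, Matrix.map_apply, Matrix.one_apply, Matrix.neg_apply,
      apply_ite (Int.cast : ℤ → ZMod 2), hneg, apply_ite (fun t : ZMod 2 => -t)]

lemma symp_mod2 {M : SpMat g} (hM : IsSymplectic M) :
    (M.map (Int.cast : ℤ → ZMod 2))ᵀ * sg g * (M.map (Int.cast : ℤ → ZMod 2)) = sg g := by
  have h2 : (Mᵀ * Jmat g * M).map ⇑(Int.castRingHom (ZMod 2))
      = (Jmat g).map ⇑(Int.castRingHom (ZMod 2)) := by rw [hM]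
  rw [Matrix.map_mul, Matrix.map_mul, transpose_map] at h2
  have hc : ⇑(Int.castRingHom (ZMod 2)) = (Int.cast : ℤ → ZMod 2) := rfl
  rw [hc, Jmap] at h2
  exact h2

lemma spp_mul_apply_inl (Y : Matrix (Fin g ⊕ Fin g) (Fin g ⊕ Fin g) (ZMod 2)) (i : Fin g)
    (k : Fin g ⊕ Fin g) : (spp g * Y) (Sum.inl i) k = Y (Sum.inr i) k := by
  simp [spp, mul_apply, Fintype.sum_sum_type, Matrix.one_apply, Finset.sum_ite_eq]

lemma spp_mul_apply_inr (Y : Matrix (Fin g ⊕ Fin g) (Fin g ⊕ Fin g) (ZMod 2)) (i : Fin g)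
    (k : Fin g ⊕ Fin g) : (spp g * Y) (Sum.inr i) k = 0 := by
  simp [spp, mul_apply, Fintype.sum_sum_type, Matrix.one_apply, Finset.sum_ite_eq]

lemma mul_spp_mul_T (X : Matrix (Fin g ⊕ Fin g) (Fin g ⊕ Fin g) (ZMod 2))
    (a b : Fin g ⊕ Fin g) :
    (X * spp g * Xᵀ) a b = ∑ k, X a (Sum.inl k) * X b (Sum.inr k) := by
  rw [Matrix.mul_assoc, mul_apply, Fintype.sum_sum_type]
  simp only [spp_mul_apply_inl, spp_mul_apply_inr, transpose_apply, mul_zero,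
    Finset.sum_const_zero, add_zero]

lemma charAct_bridge (M : SpMat g) (hM : IsSymplectic M) (m : TChar g) :
    charAct M m
      = (fun i => actF (M.map (Int.cast : ℤ → ZMod 2)) (Sum.elim m.1 m.2) (Sum.inl i),
         fun i => actF (M.map (Int.cast : ℤ → ZMod 2)) (Sum.elim m.1 m.2) (Sum.inr i)) := by
  have hP2 := symp_mod2 hM
  have hinv : ((M.map (Int.cast : ℤ → ZMod 2))ᵀ)⁻¹
      = sg g * (M.map (Int.cast : ℤ → ZMod 2)) * sg g := inv_transpose hP2
  have hd21 : ∀ i : Fin g, (((M.toBlocks₂₁ * M.toBlocks₂₂ᵀ) i i : ℤ) : ZMod 2)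
      = Dvec (M.map (Int.cast : ℤ → ZMod 2)) (Sum.inl i) := by
    intro i
    unfold Dvec
    rw [show Sum.swap (Sum.inl i : Fin g ⊕ Fin g) = Sum.inr i from rfl, mul_spp_mul_T,
      mul_apply]
    push_cast
    rfl
  have hd11 : ∀ i : Fin g, (((M.toBlocks₁₁ * M.toBlocks₁₂ᵀ) i i : ℤ) : ZMod 2)
      = Dvec (M.map (Int.cast : ℤ → ZMod 2)) (Sum.inr i) := by
    intro i
    unfold Dvec
    rw [show Sum.swap (Sum.inr i : Fin g ⊕ Fin g) = Sum.inl i from rfl, mul_spp_mul_T,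
      mul_apply]
    push_cast
    rfl
  refine Prod.ext ?_ ?_
  · funext i
    show (((M.map (Int.cast : ℤ → ZMod 2))ᵀ)⁻¹ *ᵥ (Sum.elim m.1 m.2)) (Sum.inl i)
        + (((M.toBlocks₂₁ * M.toBlocks₂₂ᵀ) i i : ℤ) : ZMod 2)
      = ((sg g * (M.map (Int.cast : ℤ → ZMod 2)) * sg g) *ᵥ (Sum.elim m.1 m.2)) (Sum.inl i)
        + Dvec (M.map (Int.cast : ℤ → ZMod 2)) (Sum.inl i)
    rw [hinv, hd21 i]
  · funext i
    show (((M.map (Int.cast : ℤ → ZMod 2))ᵀ)⁻¹ *ᵥ (Sum.elim m.1 m.2)) (Sum.inr i)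
        + (((M.toBlocks₁₁ * M.toBlocks₁₂ᵀ) i i : ℤ) : ZMod 2)
      = ((sg g * (M.map (Int.cast : ℤ → ZMod 2)) * sg g) *ᵥ (Sum.elim m.1 m.2)) (Sum.inr i)
        + Dvec (M.map (Int.cast : ℤ → ZMod 2)) (Sum.inr i)
    rw [hinv, hd11 i]

lemma actF_one (x : (Fin g ⊕ Fin g) → ZMod 2) :
    actF (1 : Matrix (Fin g ⊕ Fin g) (Fin g ⊕ Fin g) (ZMod 2)) x = x := by
  unfold actF Dvec
  rw [Matrix.mul_one, sg_mul_sg, one_mulVec, transpose_one, Matrix.mul_one, Matrix.one_mul]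
  funext j
  rw [Pi.add_apply, spp_diag, add_zero]

end Bridge


end ThetaCharAux

/-- `M{m}` defines an action of `Sp(2g,ℤ)` on theta characteristics, preserving
the parity of characteristics. -/
theorem charAct_group_action_and_parity (g : ℕ) (hg : 1 ≤ g) :
    (∀ m : TChar g, charAct (1 : SpMat g) m = m) ∧
    (∀ M N : SpMat g, IsSymplectic M → IsSymplectic N →
      ∀ m : TChar g, charAct (M * N) m = charAct M (charAct N m)) ∧
    (∀ M : SpMat g, IsSymplectic M → ∀ m : TChar g,
      (IsEvenChar (charAct M m) ↔ IsEvenChar m)) := by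
  refine ⟨?_, ?_, ?_⟩
  · intro m
    have h1 : IsSymplectic (1 : SpMat g) := by
      unfold IsSymplectic
      rw [transpose_one, Matrix.one_mul, Matrix.mul_one]
    rw [charAct_bridge 1 h1 m]
    have hmap : (1 : SpMat g).map (Int.cast : ℤ → ZMod 2) = 1 :=
      Matrix.map_one _ (by simp) (by simp)
    rw [hmap, actF_one]
    rfl
  · intro M N hM hN m
    have hMN : IsSymplectic (M * N) := by
      show (M * N)ᵀ * Jmat g * (M * N) = Jmat g
      rw [transpose_mul]
      calc Nᵀ * Mᵀ * Jmat g * (M * N) = Nᵀ * (Mᵀ * Jmat g * M) * N := by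
            simp only [Matrix.mul_assoc]
        _ = Jmat g := by rw [hM, hN]
    rw [charAct_bridge _ hMN, charAct_bridge _ hM, charAct_bridge _ hN]
    have hx : Sum.elim
        (fun i => actF (N.map (Int.cast : ℤ → ZMod 2)) (Sum.elim m.1 m.2) (Sum.inl i))
        (fun i => actF (N.map (Int.cast : ℤ → ZMod 2)) (Sum.elim m.1 m.2) (Sum.inr i))
        = actF (N.map (Int.cast : ℤ → ZMod 2)) (Sum.elim m.1 m.2) := by
      funext j; rcases j with j | j <;> rfl
    have hmapmul : (M * N).map (Int.cast : ℤ → ZMod 2)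
        = M.map (Int.cast : ℤ → ZMod 2) * N.map (Int.cast : ℤ → ZMod 2) := by
      rw [show (Int.cast : ℤ → ZMod 2) = ⇑(Int.castRingHom (ZMod 2)) from rfl]
      exact Matrix.map_mul
    rw [hx, hmapmul, actF_comp (symp_mod2 hM) (symp_mod2 hN)]
  · intro M hM m
    rw [charAct_bridge _ hM]
    have hq : (∑ i, actF (M.map (Int.cast : ℤ → ZMod 2)) (Sum.elim m.1 m.2) (Sum.inl i)
          * actF (M.map (Int.cast : ℤ → ZMod 2)) (Sum.elim m.1 m.2) (Sum.inr i))
        = ∑ i, m.1 i * m.2 i := by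
      rw [even_sum_eq, actF_parity (symp_mod2 hM), ← even_sum_eq]
      simp
    show (∑ i, actF (M.map (Int.cast : ℤ → ZMod 2)) (Sum.elim m.1 m.2) (Sum.inl i)
          * actF (M.map (Int.cast : ℤ → ZMod 2)) (Sum.elim m.1 m.2) (Sum.inr i)) = 0
      ↔ (∑ i, m.1 i * m.2 i) = 0
    rw [hq]
end

section
/- For every g ≥ 1, the action m ↦ M{m} of Sp(2g,ℤ) on theta characteristics is doubly transitive on the set of even characteristics: for any even characteristics m₁ ≠ m₂ and n₁ ≠ n₂ in 𝔽₂^{2g}, there exists M ∈ Sp(2g,ℤ) with M{m₁} = n₁ and M{m₂} = n₂. -/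
open BigOperators Matrix

namespace ThetaAux
set_option linter.unusedSectionVars false

variable {g : ℕ}

abbrev MB (g : ℕ) := Matrix (Fin g ⊕ Fin g) (Fin g ⊕ Fin g) (ZMod 2)
abbrev MG (g : ℕ) := Matrix (Fin g) (Fin g) (ZMod 2)

def ee (m n : TChar g) : ZMod 2 := ∑ i, (m.1 i * n.2 i + m.2 i * n.1 i)

/-- the quadratic form -/
def qf (m : TChar g) : ZMod 2 := ∑ i, m.1 i * m.2 i

lemma z2 (P : ZMod 2 → Prop) [DecidablePred P] (h : ∀ a, decide (P a) = true) (a : ZMod 2) : P a :=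
  of_decide_eq_true (h a)

lemma ee_add_left (m n k : TChar g) : ee (m + n) k = ee m k + ee n k := by
  simp only [ee, Prod.fst_add, Prod.snd_add, Pi.add_apply, ← Finset.sum_add_distrib]
  exact Finset.sum_congr rfl fun i _ => by ring

lemma ee_add_right (m n k : TChar g) : ee k (m + n) = ee k m + ee k n := by
  simp only [ee, Prod.fst_add, Prod.snd_add, Pi.add_apply, ← Finset.sum_add_distrib]
  exact Finset.sum_congr rfl fun i _ => by ring

lemma ee_smul_left (c : ZMod 2) (m k : TChar g) : ee (c • m) k = c * ee m k := by
  simp only [ee, Prod.smul_fst, Prod.smul_snd, Pi.smul_apply, smul_eq_mul, Finset.mul_sum]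
  exact Finset.sum_congr rfl fun i _ => by ring

lemma ee_self (m : TChar g) : ee m m = 0 := by
  simp only [ee]
  rw [Finset.sum_eq_zero]
  intro i _
  have : ∀ a b : ZMod 2, a * b + b * a = 0 := by decide
  exact this _ _

lemma ee_comm (m n : TChar g) : ee m n = ee n m := by
  simp only [ee]
  exact Finset.sum_congr rfl fun i _ => by ring

lemma ee_zero_left (m : TChar g) : ee 0 m = 0 := by
  simp [ee]

lemma qf_add (m n : TChar g) : qf (m + n) = qf m + qf n + ee m n := by
  simp only [qf, ee, Prod.fst_add, Prod.snd_add, Pi.add_apply, ← Finset.sum_add_distrib]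
  exact Finset.sum_congr rfl fun i _ => by ring

lemma qf_smul (c : ZMod 2) (m : TChar g) : qf (c • m) = c * qf m := by
  simp only [qf, Prod.smul_fst, Prod.smul_snd, Pi.smul_apply, smul_eq_mul, Finset.mul_sum]
  have hc : c * c = c := by revert c; decide
  exact Finset.sum_congr rfl fun i _ => by
    rw [show c * m.1 i * (c * m.2 i) = c * c * (m.1 i * m.2 i) by ring, hc]

lemma qf_zero : qf (0 : TChar g) = 0 := by simp [qf]

/-- the affine transvection-type map -/
def Ftr (v m : TChar g) : TChar g := m + (ee v m + qf v + 1) • v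

lemma tadd_self (m : TChar g) : m + m = 0 := by
  have h : ∀ a : ZMod 2, a + a = 0 := by decide
  apply Prod.ext <;> funext i <;> simp [h]

lemma Ftr_map (m n : TChar g) (hm : qf m = 0) (hn : qf n = 0) : Ftr (m + n) m = n := by
  have hco : ee (m + n) m + qf (m + n) + 1 = 1 := by
    rw [ee_add_left, qf_add, ee_self, hm, hn, ee_comm n m]
    have : ∀ a : ZMod 2, 0 + a + (0 + 0 + a) + 1 = 1 := by decide
    exact this (ee m n)
  rw [Ftr, hco, one_smul, ← add_assoc, tadd_self, zero_add]

lemma Ftr_parity (v m : TChar g) : qf (Ftr v m) = qf m := by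
  rw [Ftr, qf_add, qf_smul, ee_comm m, ee_smul_left]
  have : ∀ a b c : ZMod 2, c + (a + b + 1) * b + (a + b + 1) * a = c := by decide
  exact this (ee v m) (qf v) (qf m)

lemma ee_smul_right (c : ZMod 2) (m k : TChar g) : ee k (c • m) = c * ee k m := by
  rw [ee_comm, ee_smul_left, ee_comm m k]

lemma Ftr_invol (v m : TChar g) : Ftr v (Ftr v m) = m := by
  have hco : ee v (Ftr v m) = ee v m := by
    rw [Ftr, ee_add_right, ee_smul_right, ee_self, mul_zero, add_zero]
  rw [show Ftr v (Ftr v m) = Ftr v m + (ee v (Ftr v m) + qf v + 1) • v from rfl, hco, Ftr,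
    add_assoc, ← add_smul]
  have h2 : ∀ a : ZMod 2, a + a = 0 := by decide
  rw [h2, zero_smul, add_zero]

lemma Ftr_fix (v p : TChar g) (h : ee v p + qf v + 1 = 0) : Ftr v p = p := by
  rw [Ftr, h, zero_smul, add_zero]

lemma Ftr_fix_zero_of_odd (v : TChar g) (h : qf v = 1) : Ftr v 0 = 0 := by
  apply Ftr_fix
  rw [ee_comm, ee_zero_left, h]
  decide

def red (M : SpMat g) : MB g := M.map (Int.cast)

lemma red_mul (M N : SpMat g) : red (M * N) = red M * red N := by
  have := Matrix.map_mul (L := M) (M := N) (f := Int.castRingHom (ZMod 2))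
  simpa [red] using this

lemma red_transpose (M : SpMat g) : red (Mᵀ) = (red M)ᵀ := rfl

lemma red_one : red (1 : SpMat g) = 1 := by
  ext i j
  simp [red, Matrix.one_apply, apply_ite (Int.cast : ℤ → ZMod 2)]

def Jb (g : ℕ) : MB g := Matrix.fromBlocks 0 1 1 0

lemma red_J : red (Jmat g) = Jb g := by
  ext i j
  have hneg : ∀ a : ZMod 2, -a = a := by decide
  rcases i with i | i <;> rcases j with j | j <;>
    simp [red, Jmat, Jb, Matrix.one_apply, apply_ite (Int.cast : ℤ → ZMod 2), hneg]

lemma Jb_sq : Jb g * Jb g = 1 := by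
  simp [Jb, Matrix.fromBlocks_multiply, Matrix.fromBlocks_one]

lemma symp_mul {M N : SpMat g} (hM : IsSymplectic M) (hN : IsSymplectic N) :
    IsSymplectic (M * N) := by
  unfold IsSymplectic at *
  rw [Matrix.transpose_mul]
  calc Nᵀ * Mᵀ * Jmat g * (M * N) = Nᵀ * (Mᵀ * Jmat g * M) * N := by
        noncomm_ring
    _ = Jmat g := by rw [hM]; exact hN

lemma J_mul_J : Jmat g * Jmat g = -1 := by
  have : (Matrix.fromBlocks (-1) 0 0 (-1) : SpMat g) = -(Matrix.fromBlocks 1 0 0 1) := by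
    ext i j
    rcases i with i | i <;> rcases j with j | j <;> simp [Matrix.one_apply]
  simp only [Jmat, Matrix.fromBlocks_multiply]
  simp only [Matrix.mul_one, Matrix.one_mul, Matrix.mul_zero, Matrix.zero_mul,
    add_zero, zero_add, neg_zero]
  rw [this, Matrix.fromBlocks_one]

lemma symp_other {M : SpMat g} (h : IsSymplectic M) : M * Jmat g * Mᵀ = Jmat g := by
  have h1 : Mᵀ * (Jmat g * M * (-(Jmat g))) = 1 := by
    calc Mᵀ * (Jmat g * M * (-(Jmat g))) = (Mᵀ * Jmat g * M) * (-(Jmat g)) := by noncomm_ring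
      _ = Jmat g * (-(Jmat g)) := by rw [h]
      _ = 1 := by rw [mul_neg, J_mul_J]; simp
  have h2 : (Jmat g * M * (-(Jmat g))) * Mᵀ = 1 := mul_eq_one_comm.mp h1
  have h4 : Jmat g * (Jmat g * M * -(Jmat g) * Mᵀ) = Jmat g := by rw [h2, mul_one]
  have h5 : Jmat g * (Jmat g * M * -(Jmat g) * Mᵀ) = (Jmat g * Jmat g) * -(M * Jmat g * Mᵀ) := by
    noncomm_ring
  rw [h5, J_mul_J, neg_one_mul, neg_neg] at h4
  exact h4

lemma symp_red {M : SpMat g} (h : IsSymplectic M) :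
    (red M)ᵀ * Jb g * red M = Jb g := by
  have := congrArg red h
  rw [red_mul, red_mul, red_transpose, red_J] at this
  exact this

lemma symp_red' {M : SpMat g} (h : IsSymplectic M) :
    red M * Jb g * (red M)ᵀ = Jb g := by
  have := congrArg red (symp_other h)
  rw [red_mul, red_mul, red_transpose, red_J] at this
  exact this

lemma red_transpose_inv {M : SpMat g} (h : IsSymplectic M) :
    ((red M)ᵀ)⁻¹ = Jb g * red M * Jb g := by
  apply Matrix.inv_eq_left_inv
  calc Jb g * red M * Jb g * (red M)ᵀ = Jb g * (red M * Jb g * (red M)ᵀ) := by noncomm_ring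
    _ = Jb g * Jb g := by rw [symp_red' h]
    _ = 1 := Jb_sq

lemma matadd_eq_zero {X Y : MG g} (h : X + Y = 0) : Y = X := by
  have := eq_neg_of_add_eq_zero_right h
  rw [this]
  ext i j
  have : ∀ a : ZMod 2, -a = a := by decide
  simp [this]

lemma diag_mul_transpose (X Y : MG g) (i : Fin g) :
    (X * Yᵀ) i i = X i ⬝ᵥ Y i := by
  simp [Matrix.mul_apply, dotProduct, Matrix.transpose_apply]

lemma row_mul (P Q : MG g) (i : Fin g) : (P * Q) i = Matrix.vecMul (P i) Q := by
  funext j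
  simp [Matrix.mul_apply, Matrix.vecMul, dotProduct]

open Finset in
lemma quad_diag (S : MG g) (hS : Sᵀ = S) (r : Fin g → ZMod 2) :
    r ⬝ᵥ S.mulVec r = r ⬝ᵥ (fun j => S j j) := by
  have expand : r ⬝ᵥ S.mulVec r = ∑ p ∈ univ ×ˢ univ, r p.1 * S p.1 p.2 * r p.2 := by
    rw [Finset.sum_product]
    simp only [dotProduct, Matrix.mulVec, dotProduct, Finset.mul_sum]
    exact Finset.sum_congr rfl fun i _ => Finset.sum_congr rfl fun j _ => by ring
  rw [expand,
    ← Finset.sum_filter_add_sum_filter_not (univ ×ˢ univ) (fun p => p.1 = p.2)]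
  have hoff : ∑ p ∈ (univ ×ˢ univ).filter (fun p => ¬ p.1 = p.2),
      r p.1 * S p.1 p.2 * r p.2 = 0 := by
    apply Finset.sum_involution (fun p _ => Prod.swap p)
    · intro p hp
      have hsym : S p.2 p.1 = S p.1 p.2 := by
        calc S p.2 p.1 = Sᵀ p.1 p.2 := rfl
          _ = S p.1 p.2 := by rw [hS]
      have : ∀ a b : ZMod 2, a + a = 0 := by decide
      simp only [Prod.fst_swap, Prod.snd_swap, hsym]
      rw [show r p.2 * S p.1 p.2 * r p.1 = r p.1 * S p.1 p.2 * r p.2 by ring]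
      exact this _ 0
    · intro p hp _
      simp only [Finset.mem_filter] at hp
      intro hc
      exact hp.2 (congrArg Prod.fst hc).symm
    · intro p hp
      simp only [Finset.mem_filter, Finset.mem_product] at hp ⊢
      exact ⟨⟨Finset.mem_univ _, Finset.mem_univ _⟩, fun h => hp.2 h.symm⟩
    · intro p hp
      rfl
  rw [hoff, add_zero]
  have hdiag : ∑ p ∈ (univ ×ˢ univ).filter (fun p => p.1 = p.2),
      r p.1 * S p.1 p.2 * r p.2 = ∑ i, r i * S i i * r i := by
    apply Finset.sum_nbij' (fun p => p.1) (fun i => (i, i))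
    · intro p hp
      exact Finset.mem_univ _
    · intro i _
      simp
    · intro p hp
      simp only [Finset.mem_filter] at hp
      exact Prod.ext rfl hp.2
    · intro i _
      rfl
    · intro p hp
      simp only [Finset.mem_filter] at hp
      rw [← hp.2]
  rw [hdiag]
  simp only [dotProduct]
  apply Finset.sum_congr rfl
  intro i _
  have : ∀ a b : ZMod 2, a * b * a = a * b := by decide
  exact this _ _

lemma vecMul_dot (x y : Fin g → ZMod 2) (P Q : MG g) :
    Matrix.vecMul x P ⬝ᵥ Matrix.vecMul y Q = x ⬝ᵥ (P * Qᵀ).mulVec y := by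
  rw [← Matrix.mulVec_transpose Q y, ← Matrix.dotProduct_mulVec, Matrix.mulVec_mulVec]

lemma key_diag (A' B' C' D' : MG g)
    (hAB : (A' * B'ᵀ)ᵀ = A' * B'ᵀ) (hCD : (C' * D'ᵀ)ᵀ = C' * D'ᵀ)
    (hADBC : A' * D'ᵀ + B' * C'ᵀ = 1) (r s : Fin g → ZMod 2) :
    (Matrix.vecMul r A' + Matrix.vecMul s C') ⬝ᵥ (Matrix.vecMul r B' + Matrix.vecMul s D')
      = r ⬝ᵥ (fun j => (A' * B'ᵀ) j j) + s ⬝ᵥ (fun j => (C' * D'ᵀ) j j) + r ⬝ᵥ s := by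
  rw [add_dotProduct, dotProduct_add, dotProduct_add]
  rw [vecMul_dot r r A' B', vecMul_dot r s A' D', vecMul_dot s r C' B', vecMul_dot s s C' D']
  rw [quad_diag _ hAB, quad_diag _ hCD]
  have hswap : s ⬝ᵥ (C' * B'ᵀ).mulVec r = r ⬝ᵥ (B' * C'ᵀ).mulVec s := by
    rw [Matrix.dotProduct_mulVec, ← Matrix.mulVec_transpose (C' * B'ᵀ) s, Matrix.transpose_mul,
      Matrix.transpose_transpose, dotProduct_comm]
  rw [hswap]
  have hcross : r ⬝ᵥ (A' * D'ᵀ).mulVec s + r ⬝ᵥ (B' * C'ᵀ).mulVec s = r ⬝ᵥ s := by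
    rw [← dotProduct_add, ← Matrix.add_mulVec, hADBC, Matrix.one_mulVec]
  ring_nf
  ring_nf at hcross
  rw [show r ⬝ᵥ (fun j => (A' * B'ᵀ) j j) + r ⬝ᵥ (A' * D'ᵀ).mulVec s + r ⬝ᵥ (B' * C'ᵀ).mulVec s
      + s ⬝ᵥ (fun j => (C' * D'ᵀ) j j)
    = r ⬝ᵥ (fun j => (A' * B'ᵀ) j j) + (r ⬝ᵥ (A' * D'ᵀ).mulVec s + r ⬝ᵥ (B' * C'ᵀ).mulVec s)
      + s ⬝ᵥ (fun j => (C' * D'ᵀ) j j) from by ring, hcross]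
  ring

def bA (M : SpMat g) : MG g := (red M).toBlocks₁₁
def bB (M : SpMat g) : MG g := (red M).toBlocks₁₂
def bC (M : SpMat g) : MG g := (red M).toBlocks₂₁
def bD (M : SpMat g) : MG g := (red M).toBlocks₂₂

/-- diagonal of a square matrix as a vector -/
def dgv (X : MG g) : Fin g → ZMod 2 := fun j => X j j

lemma JbMJb (N : MB g) : Jb g * N * Jb g =
    Matrix.fromBlocks N.toBlocks₂₂ N.toBlocks₂₁ N.toBlocks₁₂ N.toBlocks₁₁ := by
  conv_lhs => rw [← Matrix.fromBlocks_toBlocks N]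
  rw [Jb, Matrix.fromBlocks_multiply, Matrix.fromBlocks_multiply]
  simp

lemma red_block21 (M : SpMat g) : bC M = (M.toBlocks₂₁).map (Int.cast) := rfl
lemma red_block22 (M : SpMat g) : bD M = (M.toBlocks₂₂).map (Int.cast) := rfl
lemma red_block11 (M : SpMat g) : bA M = (M.toBlocks₁₁).map (Int.cast) := rfl
lemma red_block12 (M : SpMat g) : bB M = (M.toBlocks₁₂).map (Int.cast) := rfl

lemma cast_diag (X Y : Matrix (Fin g) (Fin g) ℤ) (i : Fin g) :
    (((X * Yᵀ) i i : ℤ) : ZMod 2) = ((X.map (Int.cast) * (Y.map (Int.cast))ᵀ : MG g)) i i := by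
  simp [Matrix.mul_apply, Matrix.transpose_apply, Matrix.map_apply]

lemma charAct_eq {M : SpMat g} (h : IsSymplectic M) (m : TChar g) :
    charAct M m = (bD M *ᵥ m.1 + bC M *ᵥ m.2 + dgv (bC M * (bD M)ᵀ),
                   bB M *ᵥ m.1 + bA M *ᵥ m.2 + dgv (bA M * (bB M)ᵀ)) := by
  have hinv : (((M.map (Int.cast) : MB g))ᵀ)⁻¹ = Jb g * red M * Jb g := red_transpose_inv h
  have hblocks : Jb g * red M * Jb g =
      Matrix.fromBlocks (bD M) (bC M) (bB M) (bA M) := JbMJb (red M)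
  unfold charAct
  simp only [hinv, hblocks, Matrix.fromBlocks_mulVec, Sum.elim_comp_inl, Sum.elim_comp_inr]
  apply Prod.ext
  · funext i
    simp only [Sum.elim_inl, cast_diag, ← red_block21, ← red_block22, Pi.add_apply, dgv]
  · funext i
    simp only [Sum.elim_inr, cast_diag, ← red_block11, ← red_block12, Pi.add_apply, dgv]

lemma blocks_mul (M N : SpMat g) :
    bA (M * N) = bA M * bA N + bB M * bC N ∧
    bB (M * N) = bA M * bB N + bB M * bD N ∧
    bC (M * N) = bC M * bA N + bD M * bC N ∧
    bD (M * N) = bC M * bB N + bD M * bD N := by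
  have h : red (M * N) = Matrix.fromBlocks
      (bA M * bA N + bB M * bC N) (bA M * bB N + bB M * bD N)
      (bC M * bA N + bD M * bC N) (bC M * bB N + bD M * bD N) := by
    rw [red_mul]
    rw [show red M = Matrix.fromBlocks (bA M) (bB M) (bC M) (bD M) from
      (Matrix.fromBlocks_toBlocks (red M)).symm,
      show red N = Matrix.fromBlocks (bA N) (bB N) (bC N) (bD N) from
      (Matrix.fromBlocks_toBlocks (red N)).symm, Matrix.fromBlocks_multiply]
  exact ⟨by rw [bA, h]; exact Matrix.toBlocks_fromBlocks₁₁ _ _ _ _,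
         by rw [bB, h]; exact Matrix.toBlocks_fromBlocks₁₂ _ _ _ _,
         by rw [bC, h]; exact Matrix.toBlocks_fromBlocks₂₁ _ _ _ _,
         by rw [bD, h]; exact Matrix.toBlocks_fromBlocks₂₂ _ _ _ _⟩

lemma blocks_rel {N : SpMat g} (h : IsSymplectic N) :
    (bA N * (bB N)ᵀ)ᵀ = bA N * (bB N)ᵀ ∧
    (bC N * (bD N)ᵀ)ᵀ = bC N * (bD N)ᵀ ∧
    bA N * (bD N)ᵀ + bB N * (bC N)ᵀ = 1 := by
  have h' := symp_red' h
  rw [show red N = Matrix.fromBlocks (bA N) (bB N) (bC N) (bD N) from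
    (Matrix.fromBlocks_toBlocks (red N)).symm, Jb] at h'
  rw [Matrix.fromBlocks_transpose, Matrix.fromBlocks_multiply, Matrix.fromBlocks_multiply] at h'
  simp only [Matrix.mul_zero, Matrix.mul_one, Matrix.zero_mul, Matrix.one_mul,
    zero_add, add_zero] at h'
  have h11 := congrArg Matrix.toBlocks₁₁ h'
  have h12 := congrArg Matrix.toBlocks₁₂ h'
  have h22 := congrArg Matrix.toBlocks₂₂ h'
  simp only [Matrix.toBlocks_fromBlocks₁₁, Matrix.toBlocks_fromBlocks₁₂,
    Matrix.toBlocks_fromBlocks₂₂] at h11 h12 h22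
  refine ⟨?_, ?_, ?_⟩
  · have := matadd_eq_zero h11
    rw [Matrix.transpose_mul, Matrix.transpose_transpose, ← this]
  · have := matadd_eq_zero h22
    rw [Matrix.transpose_mul, Matrix.transpose_transpose, ← this]
  · rw [add_comm] at h12
    exact h12

lemma charAct_mul {M N : SpMat g} (hM : IsSymplectic M) (hN : IsSymplectic N) (m : TChar g) :
    charAct (M * N) m = charAct M (charAct N m) := by
  obtain ⟨e11, e12, e21, e22⟩ := blocks_mul M N
  obtain ⟨hAB, hCD, hADBC⟩ := blocks_rel hN
  rw [charAct_eq (symp_mul hM hN), charAct_eq hM, charAct_eq hN, e11, e12, e21, e22]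
  have key : ∀ (X Y : MG g) (i : Fin g),
      ((X * bA N + Y * bC N) * (X * bB N + Y * bD N)ᵀ) i i
        = (X *ᵥ dgv (bA N * (bB N)ᵀ)) i + (Y *ᵥ dgv (bC N * (bD N)ᵀ)) i + (X * Yᵀ) i i := by
    intro X Y i
    rw [diag_mul_transpose, diag_mul_transpose]
    have hrow1 : (X * bA N + Y * bC N) i
        = Matrix.vecMul (X i) (bA N) + Matrix.vecMul (Y i) (bC N) := by
      funext j
      simp [Matrix.add_apply, row_mul]
    have hrow2 : (X * bB N + Y * bD N) i
        = Matrix.vecMul (X i) (bB N) + Matrix.vecMul (Y i) (bD N) := by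
      funext j
      simp [Matrix.add_apply, row_mul]
    rw [hrow1, hrow2, key_diag (bA N) (bB N) (bC N) (bD N) hAB hCD hADBC (X i) (Y i)]
    rfl
  apply Prod.ext
  · funext i
    simp only [Pi.add_apply, Matrix.mulVec_add, Matrix.add_mulVec, Matrix.mulVec_mulVec, dgv,
      key (bC M) (bD M) i]
    ring
  · funext i
    simp only [Pi.add_apply, Matrix.mulVec_add, Matrix.add_mulVec, Matrix.mulVec_mulVec, dgv,
      key (bA M) (bB M) i]
    ring


section VecMulVec
variable {α : Type*} [CommRing α] {n : Type*} [Fintype n] [DecidableEq n]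

lemma vmv_mul_vmv (a b c d : n → α) :
    Matrix.vecMulVec a b * Matrix.vecMulVec c d = (b ⬝ᵥ c) • Matrix.vecMulVec a d := by
  ext i j
  simp only [Matrix.mul_apply, Matrix.vecMulVec_apply, Matrix.smul_apply, dotProduct,
    smul_eq_mul, Finset.sum_mul, Finset.mul_sum]
  exact Finset.sum_congr rfl fun k _ => by ring

lemma mul_vmv (M : Matrix n n α) (a b : n → α) :
    M * Matrix.vecMulVec a b = Matrix.vecMulVec (M *ᵥ a) b := by
  ext i j
  simp only [Matrix.mul_apply, Matrix.vecMulVec_apply, Matrix.mulVec, dotProduct,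
    Finset.sum_mul]
  exact Finset.sum_congr rfl fun k _ => by ring

lemma vmv_mul (a b : n → α) (M : Matrix n n α) :
    Matrix.vecMulVec a b * M = Matrix.vecMulVec a (Matrix.vecMul b M) := by
  ext i j
  simp only [Matrix.mul_apply, Matrix.vecMulVec_apply, Matrix.vecMul, dotProduct,
    Finset.mul_sum]
  exact Finset.sum_congr rfl fun k _ => by ring

lemma vmv_transpose (a b : n → α) :
    (Matrix.vecMulVec a b)ᵀ = Matrix.vecMulVec b a := by
  ext i j
  simp [Matrix.vecMulVec_apply, mul_comm]

lemma vmv_mulVec (a b x : n → α) :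
    (Matrix.vecMulVec a b) *ᵥ x = (b ⬝ᵥ x) • a := by
  funext i
  simp only [Matrix.mulVec, dotProduct, Matrix.vecMulVec_apply, Pi.smul_apply, smul_eq_mul,
    Finset.sum_mul, Finset.mul_sum]
  exact Finset.sum_congr rfl fun k _ => by ring

end VecMulVec

/-- integer lift of the (swapped) characteristic -/
def tvec (v : TChar g) : (Fin g ⊕ Fin g) → ℤ :=
  Sum.elim (fun i => ((v.2 i).val : ℤ)) (fun i => ((v.1 i).val : ℤ))

/-- the symplectic transvection matrix attached to `v` -/
def Mt (v : TChar g) : SpMat g :=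
  1 + Matrix.vecMulVec (tvec v) ((Jmat g) *ᵥ (tvec v))

lemma Jt : (Jmat g)ᵀ = -(Jmat g) := by
  rw [Jmat, Matrix.fromBlocks_transpose]
  ext i j
  rcases i with i | i <;> rcases j with j | j <;> simp

lemma J_alt (u : (Fin g ⊕ Fin g) → ℤ) : ((Jmat g) *ᵥ u) ⬝ᵥ u = 0 := by
  rw [Jmat, Matrix.fromBlocks_mulVec]
  simp only [Matrix.zero_mulVec, Matrix.one_mulVec, Matrix.neg_mulVec, zero_add, add_zero]
  rw [dotProduct, Fintype.sum_sum_type]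
  simp only [Sum.elim_inl, Sum.elim_inr, Pi.neg_apply, Function.comp_apply]
  rw [← Finset.sum_add_distrib]
  exact Finset.sum_eq_zero fun i _ => by ring

lemma Mt_symp (v : TChar g) : IsSymplectic (Mt v) := by
  set u := tvec v with hu
  set w := (Jmat g) *ᵥ u with hw
  have huw : u ⬝ᵥ w = 0 := by
    rw [dotProduct_comm]
    exact J_alt u
  have hMt : Mt v = 1 + Matrix.vecMulVec u w := rfl
  have htr : (Mt v)ᵀ = 1 + Matrix.vecMulVec w u := by
    rw [hMt, Matrix.transpose_add, Matrix.transpose_one, vmv_transpose]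
  have hWJ : Matrix.vecMulVec w u * Jmat g = -(Matrix.vecMulVec w w) := by
    rw [vmv_mul]
    have : Matrix.vecMul u (Jmat g) = -w := by
      rw [← Matrix.mulVec_transpose, Jt, Matrix.neg_mulVec, hw]
    rw [this]
    ext i j
    simp [Matrix.vecMulVec_apply]
  have hJU : Jmat g * Matrix.vecMulVec u w = Matrix.vecMulVec w w := by
    rw [mul_vmv, ← hw]
  unfold IsSymplectic
  rw [htr, hMt]
  calc (1 + Matrix.vecMulVec w u) * Jmat g * (1 + Matrix.vecMulVec u w)
      = Jmat g + Jmat g * Matrix.vecMulVec u w + (Matrix.vecMulVec w u * Jmat g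
          + Matrix.vecMulVec w u * (Jmat g * Matrix.vecMulVec u w)) := by noncomm_ring
    _ = Jmat g := by
        rw [hJU, hWJ, vmv_mul_vmv, huw, zero_smul, add_zero]
        abel


lemma zval : ∀ a : ZMod 2, (((a.val : ℤ)) : ZMod 2) = a := by decide

lemma Jmu (v : TChar g) : (Jmat g) *ᵥ (tvec v)
    = Sum.elim (fun i => -((v.1 i).val : ℤ)) (fun i => ((v.2 i).val : ℤ)) := by
  rw [Jmat, Matrix.fromBlocks_mulVec]
  funext x
  rcases x with i | i <;>
    simp [Matrix.zero_mulVec, Matrix.one_mulVec, Matrix.neg_mulVec, tvec]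

lemma bA_Mt (v : TChar g) : bA (Mt v) = 1 + Matrix.vecMulVec v.2 v.1 := by
  ext i j
  have hneg : ∀ a : ZMod 2, -a = a := by decide
  simp only [bA, red, Matrix.toBlocks₁₁, Mt, Jmu]
  simp [Matrix.add_apply, Matrix.one_apply, Matrix.map_apply,
    Matrix.vecMulVec_apply, Jmu, tvec, zval, hneg, apply_ite (Int.cast : ℤ → ZMod 2)]

lemma bB_Mt (v : TChar g) : bB (Mt v) = Matrix.vecMulVec v.2 v.2 := by
  ext i j
  simp only [bB, red, Matrix.toBlocks₁₂, Mt, Jmu]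
  simp [Matrix.add_apply, Matrix.one_apply, Matrix.map_apply,
    Matrix.vecMulVec_apply, Jmu, tvec, zval]

lemma bC_Mt (v : TChar g) : bC (Mt v) = Matrix.vecMulVec v.1 v.1 := by
  ext i j
  have hneg : ∀ a : ZMod 2, -a = a := by decide
  simp only [bC, red, Matrix.toBlocks₂₁, Mt, Jmu]
  simp [Matrix.add_apply, Matrix.one_apply, Matrix.map_apply,
    Matrix.vecMulVec_apply, Jmu, tvec, zval, hneg]

lemma bD_Mt (v : TChar g) : bD (Mt v) = 1 + Matrix.vecMulVec v.1 v.2 := by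
  ext i j
  simp only [bD, red, Matrix.toBlocks₂₂, Mt, Jmu]
  simp [Matrix.add_apply, Matrix.one_apply, Matrix.map_apply,
    Matrix.vecMulVec_apply, Jmu, tvec, zval, apply_ite (Int.cast : ℤ → ZMod 2)]

lemma hee_dot (v m : TChar g) : v.2 ⬝ᵥ m.1 + v.1 ⬝ᵥ m.2 = ee v m := by
  rw [ee, dotProduct, dotProduct, ← Finset.sum_add_distrib]
  exact Finset.sum_congr rfl fun i _ => by ring

lemma hqf_dot (v : TChar g) : v.1 ⬝ᵥ v.2 = qf v := rfl

lemma charAct_Mt (v m : TChar g) : charAct (Mt v) m = Ftr v m := by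
  rw [charAct_eq (Mt_symp v), bA_Mt, bB_Mt, bC_Mt, bD_Mt]
  have hd1 : Matrix.vecMulVec v.1 v.1 * (1 + Matrix.vecMulVec v.1 v.2)ᵀ
      = Matrix.vecMulVec v.1 v.1 + (qf v) • Matrix.vecMulVec v.1 v.1 := by
    rw [Matrix.transpose_add, Matrix.transpose_one, vmv_transpose, mul_add, mul_one,
      vmv_mul_vmv, hqf_dot]
  have hd2 : (1 + Matrix.vecMulVec v.2 v.1) * (Matrix.vecMulVec v.2 v.2)ᵀ
      = Matrix.vecMulVec v.2 v.2 + (qf v) • Matrix.vecMulVec v.2 v.2 := by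
    rw [vmv_transpose, add_mul, one_mul, vmv_mul_vmv, show v.1 ⬝ᵥ v.2 = qf v from rfl]
  apply Prod.ext
  · funext i
    rw [show (Ftr v m).1 i = m.1 i + (ee v m + qf v + 1) * v.1 i from by
      simp [Ftr, Pi.add_apply, smul_eq_mul]]
    simp only [Pi.add_apply, Matrix.add_mulVec, Matrix.one_mulVec, vmv_mulVec, dgv, hd1,
      Matrix.add_apply, Matrix.smul_apply, Matrix.vecMulVec_apply, Pi.smul_apply, smul_eq_mul,
      hee_dot]
    rw [← hee_dot]
    have sq : v.1 i * v.1 i = v.1 i := by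
      have : ∀ a : ZMod 2, a * a = a := by decide
      exact this _
    rw [sq]
    ring
  · funext i
    rw [show (Ftr v m).2 i = m.2 i + (ee v m + qf v + 1) * v.2 i from by
      simp [Ftr, Pi.add_apply, smul_eq_mul]]
    simp only [Pi.add_apply, Matrix.add_mulVec, Matrix.one_mulVec, vmv_mulVec, dgv, hd2,
      Matrix.add_apply, Matrix.smul_apply, Matrix.vecMulVec_apply, Pi.smul_apply, smul_eq_mul]
    rw [← hee_dot]
    have sq : v.2 i * v.2 i = v.2 i := by
      have : ∀ a : ZMod 2, a * a = a := by decide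
      exact this _
    rw [sq]
    ring


/-- first-type basis characteristic `α_i = (e_i, 0)` -/
def bav (i : Fin g) : TChar g := (Pi.single i 1, 0)
/-- second-type basis characteristic `β_i = (0, e_i)` -/
def bbv (i : Fin g) : TChar g := (0, Pi.single i 1)

lemma ee_bav (i : Fin g) (u : TChar g) : ee (bav i) u = u.2 i := by
  simp [ee, bav, Pi.single_apply, ite_mul]

lemma ee_bbv (i : Fin g) (u : TChar g) : ee (bbv i) u = u.1 i := by
  simp [ee, bbv, Pi.single_apply, ite_mul]

lemma qf_bav (i : Fin g) : qf (bav i) = 0 := by simp [qf, bav]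
lemma qf_bbv (i : Fin g) : qf (bbv i) = 0 := by simp [qf, bbv]

lemma pair_ok (x y z₁ z₂ : TChar g) (q1 : qf z₁ = 0) (q2 : qf z₂ = 0) (h12 : ee z₁ z₂ = 0)
    (e1 : ee z₁ x = 1) (e2 : ee z₂ x = 0) (e3 : ee z₁ y = 0) (e4 : ee z₂ y = 1) :
    ∃ z, qf z = 0 ∧ ee z x = 1 ∧ ee z y = 1 :=
  ⟨z₁ + z₂, by rw [qf_add, q1, q2, h12]; simp,
   by rw [ee_add_left, e1, e2, add_zero],
   by rw [ee_add_left, e3, e4, zero_add]⟩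

lemma exists_supp (x : TChar g) (hx : x ≠ 0) : ∃ i, x.1 i = 1 ∨ x.2 i = 1 := by
  by_contra h
  push_neg at h
  have zn1 : ∀ a : ZMod 2, a ≠ 1 → a = 0 := by decide
  apply hx
  refine Prod.ext ?_ ?_ <;> funext i <;>
    simp only [Prod.fst_zero, Prod.snd_zero, Pi.zero_apply]
  · exact zn1 _ (h i).1
  · exact zn1 _ (h i).2

/-- the clash case: `x.1 i = 1`, `y.2 i = 1`, supports otherwise disjoint -/
lemma mixed_case (x y : TChar g) (i : Fin g)
    (d1 : ∀ k, x.1 k = 1 → y.1 k = 0) (d2 : ∀ k, x.2 k = 1 → y.2 k = 0)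
    (d1' : ∀ k, y.1 k = 1 → x.1 k = 0) (d2' : ∀ k, y.2 k = 1 → x.2 k = 0)
    (hxi : x.1 i = 1) (hyi : y.2 i = 1) (hxy : ee x y = 0) :
    ∃ z, qf z = 0 ∧ ee z x = 1 ∧ ee z y = 1 := by
  have zn1 : ∀ a : ZMod 2, a ≠ 1 → a = 0 := by decide
  by_cases hA : ∃ k, x.2 k = 1 ∨ (x.1 k = 1 ∧ k ≠ i)
  · obtain ⟨k, hk⟩ := hA
    rcases hk with hk | ⟨hk, hki⟩
    · exact pair_ok x y (bav k) (bav i) (qf_bav k) (qf_bav i)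
        (by rw [ee_bav]; simp [bav])
        (by rw [ee_bav, hk]) (by rw [ee_bav]; exact d2' i hyi)
        (by rw [ee_bav]; exact d2 k hk) (by rw [ee_bav, hyi])
    · exact pair_ok x y (bbv k) (bav i) (qf_bbv k) (qf_bav i)
        (by rw [ee_bbv]; simp [bav, Pi.single_apply, if_neg hki])
        (by rw [ee_bbv, hk]) (by rw [ee_bav]; exact d2' i hyi)
        (by rw [ee_bbv]; exact d1 k hk) (by rw [ee_bav, hyi])
  by_cases hB : ∃ k, y.1 k = 1 ∨ (y.2 k = 1 ∧ k ≠ i)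
  · obtain ⟨k, hk⟩ := hB
    rcases hk with hk | ⟨hk, hki⟩
    · exact pair_ok x y (bbv i) (bbv k) (qf_bbv i) (qf_bbv k)
        (by rw [ee_bbv]; simp [bbv])
        (by rw [ee_bbv, hxi]) (by rw [ee_bbv]; exact d1' k hk)
        (by rw [ee_bbv]; exact d1 i hxi) (by rw [ee_bbv, hk])
    · exact pair_ok x y (bbv i) (bav k) (qf_bbv i) (qf_bav k)
        (by rw [ee_bbv]; simp [bav, Pi.single_apply]
            intro h; exact absurd h.symm hki)
        (by rw [ee_bbv, hxi]) (by rw [ee_bav]; exact d2' k hk)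
        (by rw [ee_bbv]; exact d1 i hxi) (by rw [ee_bav, hk])
  push_neg at hA hB
  have hone : ee x y = 1 := by
    rw [ee, Finset.sum_eq_single i]
    · rw [hxi, hyi, d2' i hyi, d1 i hxi]
      decide
    · intro k _ hk
      have hx1k : x.1 k = 0 := zn1 _ (fun h => hk ((hA k).2 h))
      have hx2k : x.2 k = 0 := zn1 _ (hA k).1
      rw [hx1k, hx2k]
      ring
    · intro h
      exact absurd (Finset.mem_univ i) h
  rw [hone] at hxy
  exact absurd hxy (by decide)

lemma exists_z (x y : TChar g) (hx : x ≠ 0) (hy : y ≠ 0) (hxy : ee x y = 0) :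
    ∃ z, qf z = 0 ∧ ee z x = 1 ∧ ee z y = 1 := by
  have zn1 : ∀ a : ZMod 2, a ≠ 1 → a = 0 := by decide
  have zcase : ∀ a : ZMod 2, a = 0 ∨ a = 1 := by decide
  by_cases h1 : ∃ i, x.1 i = 1 ∧ y.1 i = 1
  · obtain ⟨i, hxi, hyi⟩ := h1
    exact ⟨bbv i, qf_bbv i, by rw [ee_bbv, hxi], by rw [ee_bbv, hyi]⟩
  by_cases h2 : ∃ i, x.2 i = 1 ∧ y.2 i = 1
  · obtain ⟨i, hxi, hyi⟩ := h2
    exact ⟨bav i, qf_bav i, by rw [ee_bav, hxi], by rw [ee_bav, hyi]⟩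
  push_neg at h1 h2
  have d1 : ∀ k, x.1 k = 1 → y.1 k = 0 := fun k h => zn1 _ (h1 k h)
  have d2 : ∀ k, x.2 k = 1 → y.2 k = 0 := fun k h => zn1 _ (h2 k h)
  have d1' : ∀ k, y.1 k = 1 → x.1 k = 0 := by
    intro k h
    rcases zcase (x.1 k) with h0 | h1x
    · exact h0
    · have := d1 k h1x
      rw [h] at this
      exact absurd this (by decide)
  have d2' : ∀ k, y.2 k = 1 → x.2 k = 0 := by
    intro k h
    rcases zcase (x.2 k) with h0 | h2x
    · exact h0
    · have := d2 k h2x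
      rw [h] at this
      exact absurd this (by decide)
  obtain ⟨i, hi⟩ := exists_supp x hx
  obtain ⟨j, hj⟩ := exists_supp y hy
  rcases hi with hxi | hxi <;> rcases hj with hyj | hyj
  · -- x.1 i = 1, y.1 j = 1
    exact pair_ok x y (bbv i) (bbv j) (qf_bbv i) (qf_bbv j)
      (by rw [ee_bbv]; simp [bbv])
      (by rw [ee_bbv, hxi]) (by rw [ee_bbv]; exact d1' j hyj)
      (by rw [ee_bbv]; exact d1 i hxi) (by rw [ee_bbv, hyj])
  · -- x.1 i = 1, y.2 j = 1
    by_cases hij : i = j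
    · subst hij
      exact mixed_case x y i d1 d2 d1' d2' hxi hyj hxy
    · exact pair_ok x y (bbv i) (bav j) (qf_bbv i) (qf_bav j)
        (by rw [ee_bbv]; simp [bav, Pi.single_apply]
            intro h; first | exact absurd h hij | exact absurd h.symm hij)
        (by rw [ee_bbv, hxi]) (by rw [ee_bav]; exact d2' j hyj)
        (by rw [ee_bbv]; exact d1 i hxi) (by rw [ee_bav, hyj])
  · -- x.2 i = 1, y.1 j = 1 : apply the mixed lemma with roles of x and y swapped
    by_cases hij : i = j
    · subst hij
      obtain ⟨z, hz1, hz2, hz3⟩ :=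
        mixed_case y x i d1' d2' d1 d2 hyj hxi (by rw [ee_comm]; exact hxy)
      exact ⟨z, hz1, hz3, hz2⟩
    · exact pair_ok x y (bav i) (bbv j) (qf_bav i) (qf_bbv j)
        (by rw [ee_bav]; simp [bbv, Pi.single_apply]
            intro h; first | exact absurd h hij | exact absurd h.symm hij)
        (by rw [ee_bav, hxi]) (by rw [ee_bbv]; exact d1' j hyj)
        (by rw [ee_bav]; exact d2 i hxi) (by rw [ee_bbv, hyj])
  · -- x.2 i = 1, y.2 j = 1
    exact pair_ok x y (bav i) (bav j) (qf_bav i) (qf_bav j)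
      (by rw [ee_bav]; simp [bav])
      (by rw [ee_bav, hxi]) (by rw [ee_bav]; exact d2' j hyj)
      (by rw [ee_bav]; exact d2 i hxi) (by rw [ee_bav, hyj])

end ThetaAux

open ThetaAux in
/-- The action of `Sp(2g,ℤ)` on theta characteristics is doubly transitive on the
set of even characteristics. -/
theorem charAct_doubly_transitive_even (g : ℕ) (hg : 1 ≤ g)
    (m₁ m₂ n₁ n₂ : TChar g) (hm₁ : IsEvenChar m₁) (hm₂ : IsEvenChar m₂)
    (hn₁ : IsEvenChar n₁) (hn₂ : IsEvenChar n₂) (hm : m₁ ≠ m₂) (hn : n₁ ≠ n₂) :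
    ∃ M : SpMat g, IsSymplectic M ∧ charAct M m₁ = n₁ ∧ charAct M m₂ = n₂ := by
  classical
  have hm1 : qf m₁ = 0 := hm₁
  have hm2 : qf m₂ = 0 := hm₂
  have hn1 : qf n₁ = 0 := hn₁
  have hn2 : qf n₂ = 0 := hn₂
  set x := Ftr m₁ m₂ with hxdef
  set y := Ftr n₁ n₂ with hydef
  have hqx : qf x = 0 := by rw [hxdef, Ftr_parity]; exact hm2
  have hqy : qf y = 0 := by rw [hydef, Ftr_parity]; exact hn2
  have hm1z : Ftr m₁ m₁ = 0 := by
    have := Ftr_map m₁ 0 hm1 qf_zero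
    rwa [add_zero] at this
  have hn1z : Ftr n₁ n₁ = 0 := by
    have := Ftr_map n₁ 0 hn1 qf_zero
    rwa [add_zero] at this
  have h0n : Ftr n₁ 0 = n₁ := by
    have := Ftr_map 0 n₁ qf_zero hn1
    rwa [zero_add] at this
  have hx0 : x ≠ 0 := by
    intro h
    apply hm
    have e1 : m₂ = Ftr m₁ x := (Ftr_invol m₁ m₂).symm
    rw [h, ← hm1z, Ftr_invol] at e1
    exact e1.symm
  have hy0 : y ≠ 0 := by
    intro h
    apply hn
    have e1 : n₂ = Ftr n₁ y := (Ftr_invol n₁ n₂).symm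
    rw [h, ← hn1z, Ftr_invol] at e1
    exact e1.symm
  have zcase : ∀ a : ZMod 2, a = 0 ∨ a = 1 := by decide
  rcases zcase (ee x y) with hexy | hexy
  · -- `ee x y = 0` : use the auxiliary even characteristic `z`
    obtain ⟨z, hqz, hzx, hzy⟩ := exists_z x y hx0 hy0 hexy
    have hoxz : qf (x + z) = 1 := by
      rw [qf_add, hqx, hqz, ee_comm, hzx]
      decide
    have hozy : qf (z + y) = 1 := by
      rw [qf_add, hqz, hqy, hzy]
      decide
    refine ⟨Mt n₁ * (Mt (z + y) * (Mt (x + z) * Mt m₁)), ?_, ?_, ?_⟩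
    · exact symp_mul (Mt_symp _) (symp_mul (Mt_symp _) (symp_mul (Mt_symp _) (Mt_symp _)))
    · rw [charAct_mul (Mt_symp _) (symp_mul (Mt_symp _) (symp_mul (Mt_symp _) (Mt_symp _))),
        charAct_mul (Mt_symp _) (symp_mul (Mt_symp _) (Mt_symp _)),
        charAct_mul (Mt_symp _) (Mt_symp _), charAct_Mt, charAct_Mt, charAct_Mt, charAct_Mt,
        hm1z, Ftr_fix_zero_of_odd _ hoxz, Ftr_fix_zero_of_odd _ hozy, h0n]
    · rw [charAct_mul (Mt_symp _) (symp_mul (Mt_symp _) (symp_mul (Mt_symp _) (Mt_symp _))),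
        charAct_mul (Mt_symp _) (symp_mul (Mt_symp _) (Mt_symp _)),
        charAct_mul (Mt_symp _) (Mt_symp _), charAct_Mt, charAct_Mt, charAct_Mt, charAct_Mt,
        ← hxdef, Ftr_map x z hqx hqz, Ftr_map z y hqz hqy, hydef, Ftr_invol]
  · -- `ee x y = 1` : a single middle transvection works
    have hoxy : qf (x + y) = 1 := by
      rw [qf_add, hqx, hqy, hexy]
      decide
    refine ⟨Mt n₁ * (Mt (x + y) * Mt m₁), ?_, ?_, ?_⟩
    · exact symp_mul (Mt_symp _) (symp_mul (Mt_symp _) (Mt_symp _))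
    · rw [charAct_mul (Mt_symp _) (symp_mul (Mt_symp _) (Mt_symp _)),
        charAct_mul (Mt_symp _) (Mt_symp _), charAct_Mt, charAct_Mt, charAct_Mt,
        hm1z, Ftr_fix_zero_of_odd _ hoxy, h0n]
    · rw [charAct_mul (Mt_symp _) (symp_mul (Mt_symp _) (Mt_symp _)),
        charAct_mul (Mt_symp _) (Mt_symp _), charAct_Mt, charAct_Mt, charAct_Mt,
        ← hxdef, Ftr_map x y hqx hqy, hydef, Ftr_invol]
end

section
/- For every g ≥ 1 and every even positive integer l, Igusa's subgroup Γ_g[l,2l], consisting of those M = (A B; C D) ∈ Sp(2g,ℤ) with M ≡ identity mod l and such that all diagonal entries of ABᵀ/l and of CDᵀ/l are even integers, is a normal subgroup of Sp(2g,ℤ). -/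
open Matrix

/-- Membership in Igusa's subgroup `Γ_g[l,2l]`: symplectic matrices `M = (A B; C D)`
congruent to the identity mod `l` such that all diagonal entries of `ABᵀ/l` and
`CDᵀ/l` are even. -/
def InIgusaGroup {g : ℕ} (l : ℕ) (M : SpMat g) : Prop :=
  IsSymplectic M ∧ (∀ i j, (l : ℤ) ∣ (M i j - (1 : SpMat g) i j)) ∧
    (∀ i, (2 * l : ℤ) ∣ (M.toBlocks₁₁ * M.toBlocks₁₂ᵀ) i i) ∧
    (∀ i, (2 * l : ℤ) ∣ (M.toBlocks₂₁ * M.toBlocks₂₂ᵀ) i i)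


lemma J_mul_J (g : ℕ) : Jmat g * Jmat g = -1 := by
  rw [Jmat, Matrix.fromBlocks_multiply]
  ext (i|i) (j|j) <;> simp [Matrix.one_apply]

lemma symp_left_inv {g : ℕ} {M : SpMat g} (h : IsSymplectic M) :
    ((-(Jmat g)) * Mᵀ * Jmat g) * M = 1 := by
  have : (-(Jmat g)) * (Mᵀ * Jmat g * M) = 1 := by
    rw [h, neg_mul, J_mul_J]; simp
  calc ((-(Jmat g)) * Mᵀ * Jmat g) * M = (-(Jmat g)) * (Mᵀ * Jmat g * M) := by
        noncomm_ring
    _ = 1 := this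

lemma symp_inv_eq {g : ℕ} {M : SpMat g} (h : IsSymplectic M) :
    M⁻¹ = (-(Jmat g)) * Mᵀ * Jmat g := Matrix.inv_eq_left_inv (symp_left_inv h)

lemma symp_inv_mul {g : ℕ} {M : SpMat g} (h : IsSymplectic M) : M⁻¹ * M = 1 := by
  rw [symp_inv_eq h]; exact symp_left_inv h

lemma symp_mul_inv {g : ℕ} {M : SpMat g} (h : IsSymplectic M) : M * M⁻¹ = 1 :=
  mul_eq_one_comm.mp (symp_inv_mul h)

lemma symp_transpose_rel {g : ℕ} {M : SpMat g} (h : IsSymplectic M) :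
    M * Jmat g * Mᵀ = Jmat g := by
  have h1 : M * ((-(Jmat g)) * Mᵀ * Jmat g) = 1 := by
    rw [← symp_inv_eq h]; exact symp_mul_inv h
  have h2 : M * (-(Jmat g)) * Mᵀ * (Jmat g * Jmat g) = Jmat g := by
    calc M * (-(Jmat g)) * Mᵀ * (Jmat g * Jmat g)
        = (M * ((-(Jmat g)) * Mᵀ * Jmat g)) * Jmat g := by noncomm_ring
      _ = Jmat g := by rw [h1, one_mul]
  rw [J_mul_J] at h2
  have h3 : M * Jmat g * Mᵀ = - (M * (-(Jmat g)) * Mᵀ) := by noncomm_ring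
  rw [h3]
  rw [show M * (-(Jmat g)) * Mᵀ * (-1 : SpMat g) = -(M * (-(Jmat g)) * Mᵀ) by noncomm_ring] at h2
  rw [h2]

lemma dvd_mul_left_entries {n : Type*} [Fintype n] {c : ℤ} {X : Matrix n n ℤ}
    (h : ∀ a b, c ∣ X a b) (P : Matrix n n ℤ) : ∀ a b, c ∣ (P * X) a b := by
  intro a b
  rw [Matrix.mul_apply]
  exact Finset.dvd_sum fun k _ => Dvd.dvd.mul_left (h k b) _

lemma dvd_mul_right_entries {n : Type*} [Fintype n] {c : ℤ} {X : Matrix n n ℤ}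
    (h : ∀ a b, c ∣ X a b) (P : Matrix n n ℤ) : ∀ a b, c ∣ (X * P) a b := by
  intro a b
  rw [Matrix.mul_apply]
  exact Finset.dvd_sum fun k _ => Dvd.dvd.mul_right (h a k) _

lemma quad_dvd {ι : Type*} [Fintype ι] [LinearOrder ι] (c : ℤ) (Y : Matrix ι ι ℤ)
    (v : ι → ℤ) (hsym : ∀ a b, c ∣ (Y a b - Y b a)) (hdvd : ∀ a b, c ∣ 2 * Y a b)
    (hdiag : ∀ a, c ∣ Y a a) :
    c ∣ ∑ a, ∑ b, v a * Y a b * v b := by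
  set Y' : Matrix ι ι ℤ := Matrix.of fun a b =>
    if a < b then Y a b + Y b a else if a = b then Y a a else 0 with hY'
  have hY'ab : ∀ a b, Y' a b = if a < b then Y a b + Y b a else if a = b then Y a a else 0 :=
    fun a b => rfl
  have key : ∑ a, ∑ b, v a * Y a b * v b = ∑ a, ∑ b, v a * Y' a b * v b := by
    have hT : ∑ a, ∑ b, (v a * Y a b * v b - v a * Y' a b * v b) = 0 := by
      set gfun : ι → ι → ℤ := fun a b => v a * Y a b * v b - v a * Y' a b * v b with hgf
      have hanti : ∀ a b, gfun a b = - gfun b a := by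
        intro a b
        rcases lt_trichotomy a b with h | h | h
        · simp [hgf, hY'ab, h, not_lt.mpr h.le, h.ne, h.ne']; ring
        · simp [hgf, hY'ab, h]
        · simp [hgf, hY'ab, h, not_lt.mpr h.le, h.ne, h.ne']; ring
      have h1 : ∑ a, ∑ b, gfun a b = ∑ a, ∑ b, gfun b a := Finset.sum_comm
      have h2 : ∑ a, ∑ b, gfun b a = - ∑ a, ∑ b, gfun a b := by
        rw [← Finset.sum_neg_distrib]
        refine Finset.sum_congr rfl fun a _ => ?_
        rw [← Finset.sum_neg_distrib]
        exact Finset.sum_congr rfl fun b _ => hanti b a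
      have : ∑ a, ∑ b, gfun a b = 0 := by
        have := h1.trans h2; linarith
      exact this
    rw [← sub_eq_zero, ← hT]
    simp [Finset.sum_sub_distrib]
  rw [key]
  refine Finset.dvd_sum fun a _ => Finset.dvd_sum fun b _ => ?_
  have : c ∣ Y' a b := by
    rw [hY'ab]
    rcases lt_trichotomy a b with h | h | h
    · simp only [h, if_true]
      have : Y a b + Y b a = 2 * Y a b - (Y a b - Y b a) := by ring
      rw [this]; exact dvd_sub (hdvd a b) (hsym a b)
    · simp [h, hdiag b]
    · simp [not_lt.mpr h.le, h.ne']
  exact Dvd.dvd.mul_right (Dvd.dvd.mul_left this _) _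

lemma negJ_eq (g : ℕ) : -(Jmat g) = Matrix.fromBlocks 0 1 (-1) 0 := by
  ext (i|i) (j|j) <;> simp [Jmat]

lemma J_transpose (g : ℕ) : (Jmat g)ᵀ = -(Jmat g) := by
  rw [negJ_eq, Jmat, Matrix.fromBlocks_transpose]
  ext (i|i) (j|j) <;> simp

lemma mulJ_inl {g : ℕ} (Z : SpMat g) (a : Fin g ⊕ Fin g) (i : Fin g) :
    (Z * Jmat g) a (Sum.inl i) = Z a (Sum.inr i) := by
  rw [Matrix.mul_apply]
  simp [Jmat, Fintype.sum_sum_type, Matrix.one_apply, Finset.sum_ite_eq']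

lemma mulJ_inr {g : ℕ} (Z : SpMat g) (a : Fin g ⊕ Fin g) (i : Fin g) :
    (Z * Jmat g) a (Sum.inr i) = -Z a (Sum.inl i) := by
  rw [Matrix.mul_apply]
  simp [Jmat, Fintype.sum_sum_type, Matrix.one_apply, Finset.sum_ite_eq']

lemma two_l_dvd_mul {l : ℕ} (hleven : Even l) {x y : ℤ} (hx : (l:ℤ) ∣ x)
    (hy : (l:ℤ) ∣ y) : (2 * l : ℤ) ∣ x * y := by
  obtain ⟨m, hm⟩ := hleven
  obtain ⟨x', rfl⟩ := hx
  obtain ⟨y', rfl⟩ := hy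
  exact ⟨(m : ℤ) * x' * y', by push_cast [hm]; ring⟩

lemma symp_one {g : ℕ} : IsSymplectic (1 : SpMat g) := by
  unfold IsSymplectic; simp

lemma symp_mul {g : ℕ} {M N : SpMat g} (hM : IsSymplectic M) (hN : IsSymplectic N) :
    IsSymplectic (M * N) := by
  unfold IsSymplectic at *
  rw [Matrix.transpose_mul]
  calc Nᵀ * Mᵀ * Jmat g * (M * N) = Nᵀ * (Mᵀ * Jmat g * M) * N := by noncomm_ring
    _ = Nᵀ * Jmat g * N := by rw [hM]
    _ = Jmat g := hN

lemma symp_inv {g : ℕ} {M : SpMat g} (hM : IsSymplectic M) : IsSymplectic M⁻¹ := by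
  unfold IsSymplectic
  have h0 : M⁻¹ᵀ * (Mᵀ * Jmat g * M) * M⁻¹ = Jmat g := by
    rw [show M⁻¹ᵀ * (Mᵀ * Jmat g * M) * M⁻¹ = (M * M⁻¹)ᵀ * Jmat g * (M * M⁻¹) by
      rw [Matrix.transpose_mul]; noncomm_ring, symp_mul_inv hM]
    simp
  rw [hM] at h0
  exact h0

lemma inv_entry_B {g : ℕ} {M : SpMat g} (hM : IsSymplectic M) (i : Fin g) :
    M⁻¹ (Sum.inl i) (Sum.inr i) = -M (Sum.inl i) (Sum.inr i) := by
  rw [symp_inv_eq hM, mulJ_inr]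
  rw [Matrix.mul_apply]
  simp [Jmat, Fintype.sum_sum_type, Matrix.one_apply, Finset.sum_ite_eq,
    Finset.sum_ite_eq', Matrix.transpose_apply]

lemma inv_entry_C {g : ℕ} {M : SpMat g} (hM : IsSymplectic M) (i : Fin g) :
    M⁻¹ (Sum.inr i) (Sum.inl i) = -M (Sum.inr i) (Sum.inl i) := by
  rw [symp_inv_eq hM, mulJ_inl]
  rw [Matrix.mul_apply]
  simp [Jmat, Fintype.sum_sum_type, Matrix.one_apply, Finset.sum_ite_eq,
    Finset.sum_ite_eq', Matrix.transpose_apply]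

def Smem {g : ℕ} (l : ℕ) (M : SpMat g) : Prop :=
  IsSymplectic M ∧ (∀ i j, (l : ℤ) ∣ (M i j - (1 : SpMat g) i j)) ∧
    (∀ i : Fin g, (2 * l : ℤ) ∣ M (Sum.inl i) (Sum.inr i)) ∧
    (∀ i : Fin g, (2 * l : ℤ) ∣ M (Sum.inr i) (Sum.inl i))

lemma diag_equiv_B {g l : ℕ} (hleven : Even l) {M : SpMat g}
    (h1 : ∀ i j, (l : ℤ) ∣ (M i j - (1 : SpMat g) i j)) (i : Fin g) :
    (2 * l : ℤ) ∣ (M.toBlocks₁₁ * M.toBlocks₁₂ᵀ) i i - M (Sum.inl i) (Sum.inr i) := by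
  have e : (M.toBlocks₁₁ * M.toBlocks₁₂ᵀ) i i
      = ∑ k, M (Sum.inl i) (Sum.inl k) * M (Sum.inl i) (Sum.inr k) := by
    rw [Matrix.mul_apply]
    simp [Matrix.toBlocks₁₁, Matrix.toBlocks₁₂]
  rw [e, show ∑ k, M (Sum.inl i) (Sum.inl k) * M (Sum.inl i) (Sum.inr k)
        - M (Sum.inl i) (Sum.inr i)
      = ∑ k, (M (Sum.inl i) (Sum.inl k) * M (Sum.inl i) (Sum.inr k)
        - if k = i then M (Sum.inl i) (Sum.inr i) else 0) by
    rw [Finset.sum_sub_distrib]; simp]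
  refine Finset.dvd_sum fun k _ => ?_
  by_cases hk : k = i
  · subst hk
    rw [if_pos rfl, show M (Sum.inl k) (Sum.inl k) * M (Sum.inl k) (Sum.inr k)
        - M (Sum.inl k) (Sum.inr k)
      = (M (Sum.inl k) (Sum.inl k) - 1) * M (Sum.inl k) (Sum.inr k) by ring]
    refine two_l_dvd_mul hleven ?_ ?_
    · simpa [Matrix.one_apply] using h1 (Sum.inl k) (Sum.inl k)
    · simpa [Matrix.one_apply] using h1 (Sum.inl k) (Sum.inr k)
  · rw [if_neg hk, sub_zero]
    refine two_l_dvd_mul hleven ?_ ?_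
    · simpa [Matrix.one_apply, hk, Ne.symm hk] using h1 (Sum.inl i) (Sum.inl k)
    · simpa [Matrix.one_apply] using h1 (Sum.inl i) (Sum.inr k)

lemma diag_equiv_C {g l : ℕ} (hleven : Even l) {M : SpMat g}
    (h1 : ∀ i j, (l : ℤ) ∣ (M i j - (1 : SpMat g) i j)) (i : Fin g) :
    (2 * l : ℤ) ∣ (M.toBlocks₂₁ * M.toBlocks₂₂ᵀ) i i - M (Sum.inr i) (Sum.inl i) := by
  have e : (M.toBlocks₂₁ * M.toBlocks₂₂ᵀ) i i
      = ∑ k, M (Sum.inr i) (Sum.inl k) * M (Sum.inr i) (Sum.inr k) := by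
    rw [Matrix.mul_apply]
    simp [Matrix.toBlocks₂₁, Matrix.toBlocks₂₂]
  rw [e, show ∑ k, M (Sum.inr i) (Sum.inl k) * M (Sum.inr i) (Sum.inr k)
        - M (Sum.inr i) (Sum.inl i)
      = ∑ k, (M (Sum.inr i) (Sum.inl k) * M (Sum.inr i) (Sum.inr k)
        - if k = i then M (Sum.inr i) (Sum.inl i) else 0) by
    rw [Finset.sum_sub_distrib]; simp]
  refine Finset.dvd_sum fun k _ => ?_
  by_cases hk : k = i
  · subst hk
    rw [if_pos rfl, show M (Sum.inr k) (Sum.inl k) * M (Sum.inr k) (Sum.inr k)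
        - M (Sum.inr k) (Sum.inl k)
      = M (Sum.inr k) (Sum.inl k) * (M (Sum.inr k) (Sum.inr k) - 1) by ring]
    refine two_l_dvd_mul hleven ?_ ?_
    · simpa [Matrix.one_apply] using h1 (Sum.inr k) (Sum.inl k)
    · simpa [Matrix.one_apply] using h1 (Sum.inr k) (Sum.inr k)
  · rw [if_neg hk, sub_zero]
    refine two_l_dvd_mul hleven ?_ ?_
    · simpa [Matrix.one_apply] using h1 (Sum.inr i) (Sum.inl k)
    · simpa [Matrix.one_apply, hk, Ne.symm hk] using h1 (Sum.inr i) (Sum.inr k)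

lemma igusa_iff_smem {g l : ℕ} (hleven : Even l) (M : SpMat g) :
    InIgusaGroup l M ↔ Smem l M := by
  constructor
  · rintro ⟨hs, h1, hb, hc⟩
    refine ⟨hs, h1, fun i => ?_, fun i => ?_⟩
    · have := dvd_sub (hb i) (diag_equiv_B hleven h1 i)
      simpa using this
    · have := dvd_sub (hc i) (diag_equiv_C hleven h1 i)
      simpa using this
  · rintro ⟨hs, h1, hb, hc⟩
    refine ⟨hs, h1, fun i => ?_, fun i => ?_⟩
    · have := dvd_add (diag_equiv_B hleven h1 i) (hb i)
      simpa using this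
    · have := dvd_add (diag_equiv_C hleven h1 i) (hc i)
      simpa using this

lemma smem_one {g l : ℕ} : Smem l (1 : SpMat g) := by
  refine ⟨symp_one, fun i j => by simp, fun i => by simp [Matrix.one_apply],
    fun i => by simp [Matrix.one_apply]⟩

lemma smem_mul {g l : ℕ} (hleven : Even l) {M N : SpMat g}
    (hM : Smem l M) (hN : Smem l N) : Smem l (M * N) := by
  obtain ⟨hMs, hM1, hMb, hMc⟩ := hM
  obtain ⟨hNs, hN1, hNb, hNc⟩ := hN
  have hXM : ∀ a b, (l : ℤ) ∣ (M - 1) a b := by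
    intro a b; simpa [Matrix.sub_apply] using hM1 a b
  have hXN : ∀ a b, (l : ℤ) ∣ (N - 1) a b := by
    intro a b; simpa [Matrix.sub_apply] using hN1 a b
  have hprod : ∀ a b, (2 * l : ℤ) ∣ ((M - 1) * (N - 1)) a b := by
    intro a b
    rw [Matrix.mul_apply]
    exact Finset.dvd_sum fun k _ => two_l_dvd_mul hleven (hXM a k) (hXN k b)
  have hiden : M * N = (M - 1) * (N - 1) + M + N - 1 := by noncomm_ring
  refine ⟨symp_mul hMs hNs, fun a b => ?_, fun i => ?_, fun i => ?_⟩
  · have : (M * N) a b - (1 : SpMat g) a b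
        = ((M - 1) * (N - 1)) a b + (M a b - (1 : SpMat g) a b)
          + (N a b - (1 : SpMat g) a b) := by
      rw [hiden]; simp [Matrix.add_apply, Matrix.sub_apply]; ring
    rw [this]
    exact dvd_add (dvd_add (dvd_trans ⟨2, by ring⟩ (hprod a b)) (hM1 a b)) (hN1 a b)
  · have : (M * N) (Sum.inl i) (Sum.inr i)
        = ((M - 1) * (N - 1)) (Sum.inl i) (Sum.inr i) + M (Sum.inl i) (Sum.inr i)
          + N (Sum.inl i) (Sum.inr i) := by
      rw [hiden]; simp [Matrix.add_apply, Matrix.sub_apply, Matrix.one_apply]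
    rw [this]
    exact dvd_add (dvd_add (hprod _ _) (hMb i)) (hNb i)
  · have : (M * N) (Sum.inr i) (Sum.inl i)
        = ((M - 1) * (N - 1)) (Sum.inr i) (Sum.inl i) + M (Sum.inr i) (Sum.inl i)
          + N (Sum.inr i) (Sum.inl i) := by
      rw [hiden]; simp [Matrix.add_apply, Matrix.sub_apply, Matrix.one_apply]
    rw [this]
    exact dvd_add (dvd_add (hprod _ _) (hMc i)) (hNc i)

lemma smem_inv {g l : ℕ} {M : SpMat g} (hM : Smem l M) : Smem l M⁻¹ := by
  obtain ⟨hMs, hM1, hMb, hMc⟩ := hM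
  have hXT : ∀ a b, (l : ℤ) ∣ (Mᵀ - 1) a b := by
    intro a b
    have : (Mᵀ - (1 : SpMat g)) a b = M b a - (1 : SpMat g) b a := by
      simp [Matrix.sub_apply, Matrix.one_apply, eq_comm]
    rw [this]; exact hM1 b a
  refine ⟨symp_inv hMs, fun a b => ?_, fun i => ?_, fun i => ?_⟩
  · have hinv1 : M⁻¹ - 1 = (-(Jmat g)) * (Mᵀ - 1) * Jmat g := by
      rw [symp_inv_eq hMs]
      have hJJ := J_mul_J g
      calc -(Jmat g) * Mᵀ * Jmat g - 1
          = -(Jmat g) * (Mᵀ - 1) * Jmat g + (-(Jmat g * Jmat g) - 1) := by noncomm_ring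
        _ = -(Jmat g) * (Mᵀ - 1) * Jmat g := by rw [hJJ]; simp
    have : M⁻¹ a b - (1 : SpMat g) a b = ((-(Jmat g)) * (Mᵀ - 1) * Jmat g) a b := by
      rw [← hinv1]; simp [Matrix.sub_apply]
    rw [this]
    exact dvd_mul_right_entries (dvd_mul_left_entries hXT _) _ a b
  · rw [inv_entry_B hMs]; exact (hMb i).neg_right
  · rw [inv_entry_C hMs]; exact (hMc i).neg_right

lemma smem_conj {g l : ℕ} (hleven : Even l) {N M : SpMat g}
    (hNs : IsSymplectic N) (hM : Smem l M) : Smem l (N * M * N⁻¹) := by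
  obtain ⟨hMs, hM1, hMb, hMc⟩ := hM
  set X : SpMat g := M - 1 with hX
  set Y : SpMat g := X * Jmat g with hY
  have hXl : ∀ a b, (l : ℤ) ∣ X a b := fun a b => by
    simpa [hX, Matrix.sub_apply] using hM1 a b
  have hYl : ∀ a b, (l : ℤ) ∣ Y a b := dvd_mul_right_entries hXl _
  -- near-symmetry of Y
  have hexp : X * Jmat g + Jmat g * Xᵀ + X * Jmat g * Xᵀ = 0 := by
    have h := symp_transpose_rel hMs
    have hMX : M = X + 1 := by rw [hX]; noncomm_ring
    rw [hMX, Matrix.transpose_add, Matrix.transpose_one] at h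
    have : X * Jmat g + Jmat g * Xᵀ + X * Jmat g * Xᵀ
        = (X + 1) * Jmat g * (Xᵀ + 1) - Jmat g := by noncomm_ring
    rw [this, h, sub_self]
  have hYmYT : Y - Yᵀ = -(Y * Xᵀ) := by
    have hYT : Yᵀ = -(Jmat g * Xᵀ) := by
      rw [hY, Matrix.transpose_mul, _root_.J_transpose]; noncomm_ring
    have h2 : X * Jmat g + Jmat g * Xᵀ = -(X * Jmat g * Xᵀ) :=
      eq_neg_of_add_eq_zero_left hexp
    rw [hY, hYT]
    calc X * Jmat g - -(Jmat g * Xᵀ) = X * Jmat g + Jmat g * Xᵀ := by noncomm_ring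
      _ = -(X * Jmat g * Xᵀ) := h2
  have hYsym : ∀ a b, (2 * l : ℤ) ∣ Y a b - Y b a := by
    intro a b
    have : Y a b - Y b a = -((Y * Xᵀ) a b) := by
      have := congrFun (congrFun hYmYT a) b
      simpa [Matrix.sub_apply, Matrix.transpose_apply, Matrix.neg_apply] using this
    rw [this]
    refine Dvd.dvd.neg_right ?_
    rw [Matrix.mul_apply]
    exact Finset.dvd_sum fun k _ => two_l_dvd_mul hleven (hYl a k) (hXl b k)
  have hYdiag : ∀ a, (2 * l : ℤ) ∣ Y a a := by
    rintro (i | i)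
    · rw [hY, mulJ_inl]
      have : X (Sum.inl i) (Sum.inr i) = M (Sum.inl i) (Sum.inr i) := by
        simp [hX, Matrix.sub_apply, Matrix.one_apply]
      rw [this]; exact hMb i
    · rw [hY, mulJ_inr]
      have : X (Sum.inr i) (Sum.inl i) = M (Sum.inr i) (Sum.inl i) := by
        simp [hX, Matrix.sub_apply, Matrix.one_apply]
      rw [this]; exact (hMc i).neg_right
  set W : SpMat g := N * Y * Nᵀ with hW
  -- linear order on the index type
  letI : LinearOrder (Fin g ⊕ Fin g) :=
    LinearOrder.lift' (Sum.elim (fun i : Fin g => (i : ℕ)) fun j : Fin g => g + (j : ℕ))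
      (by
        rintro (i | i) (j | j) h <;>
          simp only [Sum.elim_inl, Sum.elim_inr] at h
        · exact congrArg Sum.inl (Fin.ext h)
        · exact absurd h (by have := i.isLt; omega)
        · exact absurd h (by have := j.isLt; omega)
        · exact congrArg Sum.inr (Fin.ext (by omega)))
  have hWdiag : ∀ p, (2 * l : ℤ) ∣ W p p := by
    intro p
    have hWp : W p p = ∑ a, ∑ b, N p a * Y a b * N p b := by
      rw [hW, Matrix.mul_apply]
      simp_rw [Matrix.mul_apply, Matrix.transpose_apply, Finset.sum_mul]
      rw [Finset.sum_comm]
    rw [hWp]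
    exact quad_dvd (2 * l) Y (fun a => N p a) hYsym
      (fun a b => mul_dvd_mul_left 2 (hYl a b)) hYdiag
  have hK1 : N * M * N⁻¹ - 1 = -(W * Jmat g) := by
    have h1 : N * M * N⁻¹ - 1 = N * X * N⁻¹ := by
      have h := symp_mul_inv hNs
      calc N * M * N⁻¹ - 1 = N * (M - 1) * N⁻¹ + (N * N⁻¹ - 1) := by noncomm_ring
        _ = N * X * N⁻¹ := by rw [h, hX]; simp
    rw [h1, symp_inv_eq hNs, hW, hY]
    noncomm_ring
  have hK1l : ∀ a b, (l : ℤ) ∣ (N * M * N⁻¹) a b - (1 : SpMat g) a b := by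
    intro a b
    have : (N * M * N⁻¹) a b - (1 : SpMat g) a b = -((W * Jmat g) a b) := by
      have := congrFun (congrFun hK1 a) b
      simpa [Matrix.sub_apply, Matrix.neg_apply] using this
    rw [this]
    refine Dvd.dvd.neg_right ?_
    exact dvd_mul_right_entries (dvd_mul_right_entries (dvd_mul_left_entries hYl N) Nᵀ)
      (Jmat g) a b
  refine ⟨symp_mul (symp_mul hNs hMs) (symp_inv hNs), hK1l, fun i => ?_, fun i => ?_⟩
  · have : (N * M * N⁻¹) (Sum.inl i) (Sum.inr i) = W (Sum.inl i) (Sum.inl i) := by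
      have h := congrFun (congrFun hK1 (Sum.inl i)) (Sum.inr i)
      simp only [Matrix.sub_apply, Matrix.neg_apply, Matrix.one_apply_ne (by simp : (Sum.inl i : Fin g ⊕ Fin g) ≠ Sum.inr i)] at h
      rw [mulJ_inr] at h
      linarith
    rw [this]; exact hWdiag _
  · have : (N * M * N⁻¹) (Sum.inr i) (Sum.inl i) = -(W (Sum.inr i) (Sum.inr i)) := by
      have h := congrFun (congrFun hK1 (Sum.inr i)) (Sum.inl i)
      simp only [Matrix.sub_apply, Matrix.neg_apply, Matrix.one_apply_ne (by simp : (Sum.inr i : Fin g ⊕ Fin g) ≠ Sum.inl i)] at h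
      rw [mulJ_inl] at h
      linarith
    rw [this]; exact (hWdiag _).neg_right

/-- For even `l > 0`, Igusa's subgroup `Γ_g[l,2l]` is a normal subgroup of `Sp(2g,ℤ)`. -/
theorem igusa_group_normal (g : ℕ) (hg : 1 ≤ g) (l : ℕ) (hl : 0 < l) (hleven : Even l) :
    (∀ M : SpMat g, InIgusaGroup l M → IsSymplectic M) ∧
    InIgusaGroup l (1 : SpMat g) ∧
    (∀ M N : SpMat g, InIgusaGroup l M → InIgusaGroup l N → InIgusaGroup l (M * N)) ∧
    (∀ M : SpMat g, InIgusaGroup l M → InIgusaGroup l M⁻¹) ∧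
    (∀ N : SpMat g, IsSymplectic N → ∀ M : SpMat g, InIgusaGroup l M →
      InIgusaGroup l (N * M * N⁻¹)) := by
  refine ⟨fun M h => h.1, ?_, ?_, ?_, ?_⟩
  · exact (igusa_iff_smem hleven _).mpr smem_one
  · intro M N hM hN
    exact (igusa_iff_smem hleven _).mpr (smem_mul hleven
      ((igusa_iff_smem hleven M).mp hM) ((igusa_iff_smem hleven N).mp hN))
  · intro M hM
    exact (igusa_iff_smem hleven _).mpr (smem_inv ((igusa_iff_smem hleven M).mp hM))
  · intro N hN M hM
    exact (igusa_iff_smem hleven _).mpr (smem_conj hleven hN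
      ((igusa_iff_smem hleven M).mp hM))
end

section
/- Let g ≥ 1, set k_g = 4 if g = 1, k_g = 2 if g = 2, and k_g = 1 if g ≥ 3. Let G ⊆ 𝔽₂^{2g} be a Göpel group with even coset M, and lift each characteristic m ∈ M to a vector in {0,1}^{2g} ⊆ ℤ^{2g}. Then for all indices i, j ∈ {1,…,2g} one has k_g · Σ_{m∈M} mᵢmⱼ ≡ 0 mod 2, and for every index i one has k_g · Σ_{m∈M} mᵢ ≡ 0 mod 4. -/
/-!
A Göpel group `G` is a maximal isotropic subspace for a nondegenerate alternating form on
`𝔽₂^{2g}`, hence equal to its own orthogonal and of order `2^g`. The sum `Σ_{m ∈ a+G} mᵢmⱼ`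
counts the `x ∈ G` with `(x_i, x_j) = (1, 1) - (a_i, a_j)`: a fiber of the homomorphism
`x ↦ (x_i, x_j)` from `G` to `𝔽₂²`, so either empty or a coset of the kernel, whose index divides
`4`. Thus `2^g ∣ 4 Σ mᵢmⱼ`, and in the same way `2^g ∣ 2 Σ mᵢ`; since `8 ∣ k_g 2^g`, the two
congruences follow.
-/

open BigOperators

/-- The lift of a characteristic to a vector in `{0,1}^{2g} ⊆ ℤ^{2g}`. -/
def charLift {g : ℕ} (m : TChar g) : (Fin g ⊕ Fin g) → ℤ :=
  Sum.elim (fun i => ((m.1 i).val : ℤ)) (fun i => ((m.2 i).val : ℤ))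

theorem AddMonoidHom.card_dvd_card_preimage_singleton_mul_card {A B : Type*} [AddGroup A]
    [AddGroup B] (f : A →+ B) (w : B) :
    Nat.card A ∣ Nat.card (f ⁻¹' {w}) * Nat.card B := by
  by_cases hw : w ∈ Set.range f
  · obtain ⟨x, rfl⟩ := hw
    rw [Nat.card_congr (f.fiberEquivKer x), ← f.ker.card_mul_index, AddSubgroup.index_ker]
    exact mul_dvd_mul_left _ f.range.card_addSubgroup_dvd_card
  · simp [Set.preimage_singleton_eq_empty.mpr hw]

theorem finsum_mem_image_add_ite_eq_card_preimage {V W : Type*} [AddCommGroup V]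
    [AddCommGroup W] [DecidableEq W] (F : V →+ W) (H : AddSubgroup V) [Finite H] (a : V) (w : W) :
    (∑ᶠ m ∈ (a + ·) '' (H : Set V), if F m = w then (1 : ℤ) else 0) =
      Nat.card ((F.comp H.subtype) ⁻¹' {w - F a}) := by
  have := Fintype.ofFinite H
  classical
  rw [finsum_mem_image (fun x _ y _ h => add_left_cancel h), ← finsum_set_coe_eq_finsum_mem,
    finsum_eq_sum_of_fintype, Finset.sum_boole, Nat.card_eq_fintype_card, Fintype.card_subtype]
  simp [eq_sub_iff_add_eq']

theorem card_dvd_card_mul_finsum_mem_image_add_ite {V W : Type*} [AddCommGroup V]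
    [AddCommGroup W] [DecidableEq W] (F : V →+ W) (H : AddSubgroup V) [Finite H] (a : V) (w : W) :
    (Nat.card H : ℤ) ∣
      Nat.card W * ∑ᶠ m ∈ (a + ·) '' (H : Set V), if F m = w then 1 else 0 := by
  rw [finsum_mem_image_add_ite_eq_card_preimage, mul_comm]
  exact_mod_cast (F.comp H.subtype).card_dvd_card_preimage_singleton_mul_card (w - F a)

namespace LinearMap.BilinForm

variable {K V : Type*} [Field K] [AddCommGroup V] [Module K V] {B : LinearMap.BilinForm K V}

theorem sup_span_singleton_le_orthogonal (hB : B.IsAlt) {W : Submodule K V}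
    (hW : W ≤ B.orthogonal W) {v : V} (hv : v ∈ B.orthogonal W) :
    W ⊔ K ∙ v ≤ B.orthogonal (W ⊔ K ∙ v) := by
  intro _ hx _ hy
  obtain ⟨x, hxW, _, hx', rfl⟩ := Submodule.mem_sup.mp hx
  obtain ⟨y, hyW, _, hy', rfl⟩ := Submodule.mem_sup.mp hy
  obtain ⟨c, rfl⟩ := Submodule.mem_span_singleton.mp hx'
  obtain ⟨d, rfl⟩ := Submodule.mem_span_singleton.mp hy'
  have hvx : B v x = 0 := hB.isRefl _ _ (hv x hxW)
  simp [hW hxW y hyW, hv y hyW, hvx, hB.self_eq_zero]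

theorem orthogonal_eq_self_of_maximal (hB : B.IsAlt) {W : Submodule K V}
    (hW : W ≤ B.orthogonal W) (hmax : ∀ W', W' ≤ B.orthogonal W' → W ≤ W' → W' = W) :
    B.orthogonal W = W := by
  refine le_antisymm (fun v hv => ?_) hW
  rw [← hmax _ (sup_span_singleton_le_orthogonal hB hW hv) le_sup_left]
  exact Submodule.mem_sup_right (Submodule.mem_span_singleton_self v)

theorem two_mul_finrank_eq_of_orthogonal_eq_self [FiniteDimensional K V] (hB : B.Nondegenerate)
    {W : Submodule K V} (hW : B.orthogonal W = W) :
    2 * Module.finrank K W = Module.finrank K V := by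
  have := finrank_add_finrank_orthogonal' (B := B) W
  rw [hW, hB.ker_eq_bot, inf_bot_eq, finrank_bot] at this
  lia

end LinearMap.BilinForm

noncomputable def symplecticForm (g : ℕ) : LinearMap.BilinForm (ZMod 2) (TChar g) :=
  LinearMap.mk₂ (ZMod 2) symplecticPairing
    (fun _ _ _ => by
      simp only [symplecticPairing, ← Finset.sum_add_distrib]; congr! 1; simp; ring)
    (fun _ _ _ => by simp only [symplecticPairing, Finset.smul_sum]; congr! 1; simp; ring)
    (fun _ _ _ => by
      simp only [symplecticPairing, ← Finset.sum_add_distrib]; congr! 1; simp; ring)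
    (fun _ _ _ => by simp only [symplecticPairing, Finset.smul_sum]; congr! 1; simp; ring)

theorem symplecticForm_apply {g : ℕ} (m n : TChar g) :
    symplecticForm g m n = symplecticPairing m n := rfl

theorem symplecticForm_isAlt (g : ℕ) : (symplecticForm g).IsAlt := fun m => by
  simp only [symplecticForm_apply, symplecticPairing, mul_comm (m.2 _), CharTwo.add_self_eq_zero,
    Finset.sum_const_zero]

theorem symplecticForm_nondegenerate (g : ℕ) : (symplecticForm g).Nondegenerate := by
  refine ((symplecticForm_isAlt g).isRefl.nondegenerate_iff_separatingLeft).2 fun m hm => ?_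
  ext i
  · simpa [symplecticForm_apply, symplecticPairing, Pi.single_apply] using hm (0, Pi.single i 1)
  · simpa [symplecticForm_apply, symplecticPairing, Pi.single_apply] using hm (Pi.single i 1, 0)

theorem isIsotropic_iff_le_orthogonal {g : ℕ} {G : Submodule (ZMod 2) (TChar g)} :
    IsIsotropic G ↔ G ≤ (symplecticForm g).orthogonal G :=
  ⟨fun h m hm n hn => h n hn m hm, fun h m hm _ hn => h hn m hm⟩

theorem IsGopel.finrank_eq {g : ℕ} {G : Submodule (ZMod 2) (TChar g)} (hG : IsGopel G) :
    Module.finrank (ZMod 2) G = g := by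
  have hself := (symplecticForm g).orthogonal_eq_self_of_maximal (symplecticForm_isAlt g)
    (isIsotropic_iff_le_orthogonal.mp hG.1)
    fun G' hG' hle => hG.2 G' (isIsotropic_iff_le_orthogonal.mpr hG') hle
  have := LinearMap.BilinForm.two_mul_finrank_eq_of_orthogonal_eq_self
    (symplecticForm_nondegenerate g) hself
  simp only [Module.finrank_prod, Module.finrank_fintype_fun_eq_card, Fintype.card_fin] at this
  lia

theorem IsGopel.card_eq {g : ℕ} {G : Submodule (ZMod 2) (TChar g)} (hG : IsGopel G) :
    Nat.card G = 2 ^ g := by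
  rw [Module.natCard_eq_pow_finrank (K := ZMod 2), hG.finrank_eq, Nat.card_zmod]

def charCoord {g : ℕ} : Fin g ⊕ Fin g → TChar g →+ ZMod 2
  | .inl i => (Pi.evalAddMonoidHom _ i).comp (AddMonoidHom.fst _ _)
  | .inr i => (Pi.evalAddMonoidHom _ i).comp (AddMonoidHom.snd _ _)

theorem charLift_eq_ite {g : ℕ} (m : TChar g) (i : Fin g ⊕ Fin g) :
    charLift m i = if charCoord i m = 1 then 1 else 0 := by
  have key (x : ZMod 2) : (x.val : ℤ) = if x = 1 then 1 else 0 := by fin_cases x <;> rfl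
  cases i <;> exact key _

theorem charLift_mul_charLift_eq_ite {g : ℕ} (m : TChar g) (i j : Fin g ⊕ Fin g) :
    charLift m i * charLift m j = if (charCoord i).prod (charCoord j) m = (1, 1) then 1 else 0 := by
  rw [charLift_eq_ite, charLift_eq_ite]
  split_ifs <;> simp_all

theorem eight_dvd_mul_two_pow {g : ℕ} (hg : 1 ≤ g) :
    (8 : ℤ) ∣ (if g = 1 then 4 else if g = 2 then 2 else 1) * 2 ^ g := by
  obtain _ | _ | _ | g := g
  · lia
  · norm_num
  · norm_num
  · rw [if_neg (by lia), if_neg (by lia), one_mul]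
    exact Dvd.intro_left (2 ^ g) (by ring)

theorem gopel_even_coset_congruences_general (g : ℕ) (hg : 1 ≤ g)
    (k : ℤ) (hk : k = if g = 1 then 4 else if g = 2 then 2 else 1)
    (G : Submodule (ZMod 2) (TChar g)) (hG : IsGopel G) (a : TChar g)
    (M : Set (TChar g)) (hM : M = (fun x => a + x) '' (G : Set (TChar g))) :
    (∀ i j : Fin g ⊕ Fin g, (2 : ℤ) ∣ k * ∑ᶠ m ∈ M, charLift m i * charLift m j) ∧
    (∀ i : Fin g ⊕ Fin g, (4 : ℤ) ∣ k * ∑ᶠ m ∈ M, charLift m i) := by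
  subst hM
  have h8 : (8 : ℤ) ∣ k * Nat.card G := by
    rw [hG.card_eq, hk]
    exact_mod_cast eight_dvd_mul_two_pow hg
  have dvd_of_card_dvd (n d S : ℤ) (hnd : n * d = 8) (h : (Nat.card G : ℤ) ∣ n * S) :
      d ∣ k * S := by
    refine (mul_dvd_mul_iff_left (left_ne_zero_of_mul (hnd.trans_ne (by norm_num)))).mp ?_
    simpa only [hnd, mul_left_comm] using h8.trans (mul_dvd_mul_left k h)
  refine ⟨fun i j => ?_, fun i => ?_⟩
  · have h := card_dvd_card_mul_finsum_mem_image_add_ite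
      ((charCoord i).prod (charCoord j)) G.toAddSubgroup a (1, 1)
    simp only [← charLift_mul_charLift_eq_ite, Nat.card_prod, Nat.card_zmod] at h
    exact dvd_of_card_dvd 4 2 _ (by norm_num) h
  · have h := card_dvd_card_mul_finsum_mem_image_add_ite (charCoord i) G.toAddSubgroup a 1
    simp only [← charLift_eq_ite, Nat.card_zmod] at h
    exact dvd_of_card_dvd 2 4 _ (by norm_num) h

/-- Congruences satisfied by the even coset `M` of a Göpel group, where
`k_g = 4, 2, 1` for `g = 1`, `g = 2`, `g ≥ 3`:
`k_g Σ_{m∈M} mᵢmⱼ ≡ 0 (mod 2)` and `k_g Σ_{m∈M} mᵢ ≡ 0 (mod 4)`. -/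
theorem gopel_even_coset_congruences (g : ℕ) (hg : 1 ≤ g)
    (k : ℤ) (hk : k = if g = 1 then 4 else if g = 2 then 2 else 1)
    (G : Submodule (ZMod 2) (TChar g)) (hG : IsGopel G) (a : TChar g)
    (M : Set (TChar g)) (hM : M = (fun x => a + x) '' (G : Set (TChar g)))
    (heven : ∀ m ∈ M, IsEvenChar m) :
    (∀ i j : Fin g ⊕ Fin g, (2 : ℤ) ∣ k * ∑ᶠ m ∈ M, charLift m i * charLift m j) ∧
    (∀ i : Fin g ⊕ Fin g, (4 : ℤ) ∣ k * ∑ᶠ m ∈ M, charLift m i) :=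
  gopel_even_coset_congruences_general g hg k hk G hG a M hM
end

section
/- In genus 3, there exist eight pairwise distinct Göpel groups G₁,…,G₈ ⊆ 𝔽₂⁶ with even cosets M₁,…,M₈, such that the multiset of the quadruple {G₁,G₂,G₃,G₄} differs from that of {G₅,G₆,G₇,G₈}, and for every even characteristic m ∈ 𝔽₂⁶ the number of indices i ∈ {1,2,3,4} with m ∈ Mᵢ equals the number of indices i ∈ {5,6,7,8} with m ∈ Mᵢ; consequently the tautological quartic relation ϑ_{G₁}ϑ_{G₂}ϑ_{G₃}ϑ_{G₄} = ϑ_{G₅}ϑ_{G₆}ϑ_{G₇}ϑ_{G₈} holds as an identity of monomials in the theta nullwerte. -/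
set_option maxRecDepth 100000

open BigOperators Matrix

/-- The even coset of a Göpel group `G`: those `m` with `m + G` consisting of
even characteristics. -/
def evenCoset {g : ℕ} (G : Submodule (ZMod 2) (TChar g)) : Set (TChar g) :=
  {m | ∀ x ∈ G, IsEvenChar (m + x)}

/-- The Siegel upper half space of genus `g`. -/
def SiegelHalfSpace (g : ℕ) : Set (Matrix (Fin g) (Fin g) ℂ) :=
  {Z | Z.IsSymm ∧ (Z.map Complex.im).PosDef}

/-- The theta nullwert `ϑ[m](Z)` for the characteristic `m = (a,b)`. -/
noncomputable def thetaNull (g : ℕ) (Z : Matrix (Fin g) (Fin g) ℂ)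
    (m : TChar g) : ℂ :=
  ∑' n : Fin g → ℤ, Complex.exp ((Real.pi : ℂ) * Complex.I *
    ((∑ i, ∑ j, ((n i : ℂ) + ((m.1 i).val : ℂ) / 2) * Z i j * ((n j : ℂ) + ((m.1 j).val : ℂ) / 2)) +
      ∑ i, ((m.2 i).val : ℂ) * (2 * (n i : ℂ) + ((m.1 i).val : ℂ))))

/-- The Göpel form `ϑ_G = ∏_{m ∈ M} ϑ[m]`, `M` the even coset of `G`. -/
noncomputable def gopelTheta (g : ℕ) (G : Submodule (ZMod 2) (TChar g))
    (Z : Matrix (Fin g) (Fin g) ℂ) : ℂ :=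
  ∏ᶠ m ∈ evenCoset G, thetaNull g Z m

def Ss : Fin 8 → Finset (TChar 3) :=
  ![{(![0,0,0], ![0,0,0]), (![0,0,0], ![0,0,1]), (![0,0,0], ![0,1,0]), (![0,0,0], ![0,1,1]), (![0,0,0], ![1,0,0]), (![0,0,0], ![1,0,1]), (![0,0,0], ![1,1,0]), (![0,0,0], ![1,1,1])},
    {(![0,0,0], ![0,0,0]), (![0,0,0], ![0,0,1]), (![0,1,0], ![0,0,0]), (![0,1,0], ![0,0,1]), (![1,0,0], ![1,0,0]), (![1,0,0], ![1,0,1]), (![1,1,0], ![1,0,0]), (![1,1,0], ![1,0,1])},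
    {(![0,0,0], ![0,0,0]), (![0,0,0], ![0,0,1]), (![0,1,0], ![0,1,0]), (![0,1,0], ![0,1,1]), (![1,0,0], ![0,0,0]), (![1,0,0], ![0,0,1]), (![1,1,0], ![0,1,0]), (![1,1,0], ![0,1,1])},
    {(![0,0,0], ![0,0,0]), (![0,0,0], ![0,0,1]), (![0,1,0], ![1,0,0]), (![0,1,0], ![1,0,1]), (![1,0,0], ![0,1,0]), (![1,0,0], ![0,1,1]), (![1,1,0], ![1,1,0]), (![1,1,0], ![1,1,1])},
    {(![0,0,0], ![0,0,0]), (![0,0,0], ![0,0,1]), (![0,0,0], ![0,1,0]), (![0,0,0], ![0,1,1]), (![1,0,0], ![0,0,0]), (![1,0,0], ![0,0,1]), (![1,0,0], ![0,1,0]), (![1,0,0], ![0,1,1])},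
    {(![0,0,0], ![0,0,0]), (![0,0,0], ![0,0,1]), (![0,0,0], ![1,0,0]), (![0,0,0], ![1,0,1]), (![0,1,0], ![0,0,0]), (![0,1,0], ![0,0,1]), (![0,1,0], ![1,0,0]), (![0,1,0], ![1,0,1])},
    {(![0,0,0], ![0,0,0]), (![0,0,0], ![0,0,1]), (![0,0,0], ![1,1,0]), (![0,0,0], ![1,1,1]), (![1,1,0], ![0,1,0]), (![1,1,0], ![0,1,1]), (![1,1,0], ![1,0,0]), (![1,1,0], ![1,0,1])},
    {(![0,0,0], ![0,0,0]), (![0,0,0], ![0,0,1]), (![0,1,0], ![0,1,0]), (![0,1,0], ![0,1,1]), (![1,0,0], ![1,0,0]), (![1,0,0], ![1,0,1]), (![1,1,0], ![1,1,0]), (![1,1,0], ![1,1,1])}]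

def Es : Fin 8 → Finset (TChar 3) :=
  ![{(![0,0,0], ![0,0,0]), (![0,0,0], ![0,0,1]), (![0,0,0], ![0,1,0]), (![0,0,0], ![0,1,1]), (![0,0,0], ![1,0,0]), (![0,0,0], ![1,0,1]), (![0,0,0], ![1,1,0]), (![0,0,0], ![1,1,1])},
    {(![0,0,0], ![1,0,0]), (![0,0,0], ![1,0,1]), (![0,1,0], ![1,0,0]), (![0,1,0], ![1,0,1]), (![1,0,0], ![0,0,0]), (![1,0,0], ![0,0,1]), (![1,1,0], ![0,0,0]), (![1,1,0], ![0,0,1])},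
    {(![0,0,0], ![0,1,0]), (![0,0,0], ![0,1,1]), (![0,1,0], ![0,0,0]), (![0,1,0], ![0,0,1]), (![1,0,0], ![0,1,0]), (![1,0,0], ![0,1,1]), (![1,1,0], ![0,0,0]), (![1,1,0], ![0,0,1])},
    {(![0,0,0], ![0,0,0]), (![0,0,0], ![0,0,1]), (![0,1,0], ![1,0,0]), (![0,1,0], ![1,0,1]), (![1,0,0], ![0,1,0]), (![1,0,0], ![0,1,1]), (![1,1,0], ![1,1,0]), (![1,1,0], ![1,1,1])},
    {(![0,0,0], ![0,0,0]), (![0,0,0], ![0,0,1]), (![0,0,0], ![0,1,0]), (![0,0,0], ![0,1,1]), (![1,0,0], ![0,0,0]), (![1,0,0], ![0,0,1]), (![1,0,0], ![0,1,0]), (![1,0,0], ![0,1,1])},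
    {(![0,0,0], ![0,0,0]), (![0,0,0], ![0,0,1]), (![0,0,0], ![1,0,0]), (![0,0,0], ![1,0,1]), (![0,1,0], ![0,0,0]), (![0,1,0], ![0,0,1]), (![0,1,0], ![1,0,0]), (![0,1,0], ![1,0,1])},
    {(![0,0,0], ![0,1,0]), (![0,0,0], ![0,1,1]), (![0,0,0], ![1,0,0]), (![0,0,0], ![1,0,1]), (![1,1,0], ![0,0,0]), (![1,1,0], ![0,0,1]), (![1,1,0], ![1,1,0]), (![1,1,0], ![1,1,1])},
    {(![0,0,0], ![1,1,0]), (![0,0,0], ![1,1,1]), (![0,1,0], ![1,0,0]), (![0,1,0], ![1,0,1]), (![1,0,0], ![0,1,0]), (![1,0,0], ![0,1,1]), (![1,1,0], ![0,0,0]), (![1,1,0], ![0,0,1])}]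


instance {g : ℕ} (m : TChar g) : Decidable (IsEvenChar m) :=
  inferInstanceAs (Decidable (_ = 0))

def mkSub (S : Finset (TChar 3)) (h0 : (0 : TChar 3) ∈ S)
    (hadd : ∀ a ∈ S, ∀ b ∈ S, a + b ∈ S) : Submodule (ZMod 2) (TChar 3) where
  carrier := ↑S
  zero_mem' := h0
  add_mem' := fun ha hb => hadd _ ha _ hb
  smul_mem' := fun c x hx => by
    rcases (by decide : ∀ c : ZMod 2, c = 0 ∨ c = 1) c with h | h <;> subst h
    · simpa using h0
    · simpa using hx

lemma mem_mkSub {S : Finset (TChar 3)} {h0 hadd} {x : TChar 3} :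
    x ∈ mkSub S h0 hadd ↔ x ∈ S := Iff.rfl

lemma Ss_zero : ∀ i, (0 : TChar 3) ∈ Ss i := by decide

lemma Ss_add : ∀ i, ∀ a ∈ Ss i, ∀ b ∈ Ss i, a + b ∈ Ss i := by decide

def Gs : Fin 8 → Submodule (ZMod 2) (TChar 3) :=
  fun i => mkSub (Ss i) (Ss_zero i) (Ss_add i)

lemma mem_Gs {i : Fin 8} {x : TChar 3} : x ∈ Gs i ↔ x ∈ Ss i := Iff.rfl

lemma Ss_isotropic : ∀ i, ∀ m ∈ Ss i, ∀ n ∈ Ss i, symplecticPairing m n = 0 := by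
  decide

instance instPerpDec (i : Fin 8) :
    Decidable (∀ n : TChar 3, (∀ m ∈ Ss i, symplecticPairing m n = 0) → n ∈ Ss i) :=
  have : DecidablePred fun n : TChar 3 =>
      (∀ m ∈ Ss i, symplecticPairing m n = 0) → n ∈ Ss i := fun _ => inferInstance
  Fintype.decidableForallFintype

instance instKeyDec (i : Fin 8) :
    Decidable (∀ m : TChar 3, (∀ x ∈ Ss i, IsEvenChar (m + x)) ↔ m ∈ Es i) :=
  have : DecidablePred fun m : TChar 3 =>
      (∀ x ∈ Ss i, IsEvenChar (m + x)) ↔ m ∈ Es i := fun _ => inferInstance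
  Fintype.decidableForallFintype

lemma Ss_perp : ∀ i, ∀ n : TChar 3, (∀ m ∈ Ss i, symplecticPairing m n = 0) → n ∈ Ss i := by
  decide

lemma Gs_gopel (i : Fin 8) : IsGopel (Gs i) := by
  constructor
  · intro m hm n hn
    exact Ss_isotropic i m (mem_Gs.mp hm) n (mem_Gs.mp hn)
  · intro G' hiso hle
    refine le_antisymm (fun n hn => ?_) hle
    refine mem_Gs.mpr (Ss_perp i n fun m hm => ?_)
    exact hiso m (hle (mem_Gs.mpr hm)) n hn

lemma Ss_inj : ∀ i j : Fin 8, Ss i = Ss j → i = j := by decide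

lemma Gs_inj : Function.Injective Gs := by
  intro i j h
  refine Ss_inj i j (Finset.ext fun x => ?_)
  rw [← mem_Gs (i := i), ← mem_Gs (i := j), h]

lemma evenCoset_eq : ∀ i, evenCoset (Gs i) = ↑(Es i) := by
  have key : ∀ i, ∀ m : TChar 3, (∀ x ∈ Ss i, IsEvenChar (m + x)) ↔ m ∈ Es i := by
    decide
  intro i
  ext m
  simp only [evenCoset, Set.mem_setOf_eq, Finset.coe_sort_coe, Finset.mem_coe]
  constructor
  · intro h
    exact (key i m).mp fun x hx => h x (mem_Gs.mpr hx)
  · intro h x hx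
    exact (key i m).mpr h x (mem_Gs.mp hx)

lemma count_aux : ∀ m : TChar 3,
    Fintype.card {i : Fin 8 // i.val < 4 ∧ m ∈ Es i} =
      Fintype.card {i : Fin 8 // 4 ≤ i.val ∧ m ∈ Es i} := by
  decide

lemma multiset_aux :
    (Es 0).val + (Es 1).val + (Es 2).val + (Es 3).val =
      (Es 4).val + (Es 5).val + (Es 6).val + (Es 7).val := by decide

lemma gopelTheta_eq (i : Fin 8) (Z : Matrix (Fin 3) (Fin 3) ℂ) :
    gopelTheta 3 (Gs i) Z = ∏ m ∈ Es i, thetaNull 3 Z m := by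
  rw [gopelTheta, evenCoset_eq, finprod_mem_coe_finset]

/-- In genus 3 there are eight pairwise distinct Göpel groups `G₁,…,G₈`, the multiset
`{G₁,G₂,G₃,G₄}` differing from `{G₅,G₆,G₇,G₈}`, such that every even characteristic
belongs to as many of the even cosets `M₁,…,M₄` as of `M₅,…,M₈`; consequently
`ϑ_{G₁}ϑ_{G₂}ϑ_{G₃}ϑ_{G₄} = ϑ_{G₅}ϑ_{G₆}ϑ_{G₇}ϑ_{G₈}`. -/
theorem exists_gopel_quartic_relation :
    ∃ G : Fin 8 → Submodule (ZMod 2) (TChar 3),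
      (∀ i, IsGopel (G i)) ∧ Function.Injective G ∧
      ({G 0, G 1, G 2, G 3} : Multiset (Submodule (ZMod 2) (TChar 3))) ≠
        ({G 4, G 5, G 6, G 7} : Multiset (Submodule (ZMod 2) (TChar 3))) ∧
      (∀ m : TChar 3, IsEvenChar m →
        Nat.card {i : Fin 8 // i.val < 4 ∧ m ∈ evenCoset (G i)} =
          Nat.card {i : Fin 8 // 4 ≤ i.val ∧ m ∈ evenCoset (G i)}) ∧
      (∀ Z ∈ SiegelHalfSpace 3,
        gopelTheta 3 (G 0) Z * gopelTheta 3 (G 1) Z * gopelTheta 3 (G 2) Z *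
            gopelTheta 3 (G 3) Z =
          gopelTheta 3 (G 4) Z * gopelTheta 3 (G 5) Z * gopelTheta 3 (G 6) Z *
            gopelTheta 3 (G 7) Z) := by
  refine ⟨Gs, Gs_gopel, Gs_inj, ?_, ?_, ?_⟩
  · intro h
    have h0 : Gs 0 ∈ ({Gs 4, Gs 5, Gs 6, Gs 7} : Multiset (Submodule (ZMod 2) (TChar 3))) := by
      rw [← h]; simp
    simp only [Multiset.insert_eq_cons, Multiset.mem_cons, Multiset.mem_singleton] at h0
    rcases h0 with h0 | h0 | h0 | h0 <;> exact absurd (Gs_inj h0) (by decide)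
  · intro m _
    simp only [evenCoset_eq, Finset.mem_coe, Nat.card_eq_fintype_card]
    exact count_aux m
  · intro Z _
    simp only [gopelTheta_eq, Finset.prod_eq_multiset_prod, ← Multiset.prod_add,
      ← Multiset.map_add]
    rw [multiset_aux]
end
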